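/- arXiv:1603.04982 — 13 statements merged into one kernel-verified Lean document; each statement's English description precedes it below -/
import Mathlib

section
/- Fix (x,y) ∈ Ω and set R_B = f(1−x) and R_A = f(1−x) + g(y). Then for any prices p_l ≥ 0 and p_a ≥ 0, the Lebesgue measure of the set {θ ∈ [0,1] : θ·R_L − p_l > max(θ·R_A − p_a, θ·R_B)} (types strictly preferring the leasing service) equals max(1 − max(θ_la(x,y), θ_lb(x)), 0), and the Lebesgue measure of the set {θ ∈ [0,1] : θ·R_A − p_a > max(θ·R_L − p_l, θ·R_B)} (types strictly preferring the advanced service) equals max(min(θ_la(x,y), 1) − θ_ab(y), 0). -/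
open MeasureTheory Set

lemma ofReal_max_zero (a : ℝ) : ENNReal.ofReal (max a 0) = ENNReal.ofReal a := by
  rcases le_total a 0 with h | h
  · rw [max_eq_right h, ENNReal.ofReal_zero, eq_comm, ENNReal.ofReal_eq_zero]
    exact h
  · rw [max_eq_left h]

/-- given market shares (x,y) ∈ Ω, the Lebesgue measure of the set of user
types θ ∈ [0,1] strictly preferring the leasing service is
max(1 − max(θ_la, θ_lb), 0), and that of types strictly preferring the advanced service is
max(min(θ_la, 1) − θ_ab, 0). -/
theorem stmt0
    (RL : ℝ) (f g : ℝ → ℝ)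
    (hf_cont : ContinuousOn f (Set.Icc 0 1))
    (hf_nonneg : ∀ t ∈ Set.Icc (0:ℝ) 1, 0 ≤ f t)
    (hf_anti : AntitoneOn f (Set.Icc 0 1))
    (hg_cont : ContinuousOn g (Set.Icc 0 1))
    (hg_pos : ∀ t ∈ Set.Icc (0:ℝ) 1, 0 < g t)
    (hg_mono : MonotoneOn g (Set.Icc 0 1))
    (hRL : ∀ x y : ℝ, 0 ≤ x → 0 ≤ y → x + y ≤ 1 → f (1 - x) + g y < RL)
    (x y : ℝ) (hx : 0 ≤ x) (hy : 0 ≤ y) (hxy : x + y ≤ 1)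
    (pl pa : ℝ) (hpl : 0 ≤ pl) (hpa : 0 ≤ pa) :
    volume {θ : ℝ | θ ∈ Set.Icc (0:ℝ) 1 ∧
        θ * RL - pl > max (θ * (f (1 - x) + g y) - pa) (θ * f (1 - x))}
      = ENNReal.ofReal
          (max (1 - max ((pl - pa) / (RL - f (1 - x) - g y)) (pl / (RL - f (1 - x)))) 0)
    ∧
    volume {θ : ℝ | θ ∈ Set.Icc (0:ℝ) 1 ∧
        θ * (f (1 - x) + g y) - pa > max (θ * RL - pl) (θ * f (1 - x))}
      = ENNReal.ofReal
          (max (min ((pl - pa) / (RL - f (1 - x) - g y)) 1 - pa / g y) 0) := by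
  have hx1 : x ≤ 1 := by linarith
  have hy1 : y ≤ 1 := by linarith
  set B := f (1 - x) with hBdef
  set G := g y with hGdef
  have hB : 0 ≤ B := hf_nonneg _ ⟨by linarith, by linarith⟩
  have hG : 0 < G := hg_pos _ ⟨hy, hy1⟩
  have hA : B + G < RL := hRL x y hx hy hxy
  have h1 : (0:ℝ) < RL - B - G := by linarith
  have h2 : (0:ℝ) < RL - B := by linarith
  set tla := (pl - pa) / (RL - B - G) with htla
  set tlb := pl / (RL - B) with htlb
  set tab := pa / G with htab
  have htlb0 : 0 ≤ tlb := div_nonneg hpl h2.le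
  have htab0 : 0 ≤ tab := div_nonneg hpa hG.le
  constructor
  · have hset : {θ : ℝ | θ ∈ Set.Icc (0:ℝ) 1 ∧
        θ * RL - pl > max (θ * (B + G) - pa) (θ * B)} = Set.Ioc (max tla tlb) 1 := by
      ext θ
      simp only [Set.mem_setOf_eq, Set.mem_Icc, Set.mem_Ioc, max_lt_iff, gt_iff_lt]
      constructor
      · rintro ⟨⟨h0, hu⟩, ha, hb⟩
        refine ⟨⟨?_, ?_⟩, hu⟩
        · rw [htla, div_lt_iff₀ h1]; nlinarith
        · rw [htlb, div_lt_iff₀ h2]; nlinarith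
      · rintro ⟨⟨ha, hb⟩, hu⟩
        rw [htla, div_lt_iff₀ h1] at ha
        rw [htlb, div_lt_iff₀ h2] at hb
        have hθ : tlb < θ := by rw [htlb, div_lt_iff₀ h2]; linarith
        exact ⟨⟨le_trans htlb0 hθ.le, hu⟩, by nlinarith, by nlinarith⟩
    rw [hset, Real.volume_Ioc, ofReal_max_zero]
  · by_cases hc : tla ≤ 1
    · have hset : {θ : ℝ | θ ∈ Set.Icc (0:ℝ) 1 ∧
          θ * (B + G) - pa > max (θ * RL - pl) (θ * B)} = Set.Ioo tab tla := by
        ext θ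
        simp only [Set.mem_setOf_eq, Set.mem_Icc, Set.mem_Ioo, max_lt_iff, gt_iff_lt]
        constructor
        · rintro ⟨⟨h0, hu⟩, ha, hb⟩
          constructor
          · rw [htab, div_lt_iff₀ hG]; nlinarith
          · rw [htla, lt_div_iff₀ h1]; nlinarith
        · rintro ⟨ha, hb⟩
          rw [htab, div_lt_iff₀ hG] at ha
          rw [htla, lt_div_iff₀ h1] at hb
          refine ⟨⟨?_, ?_⟩, by nlinarith, by nlinarith⟩
          · have : tab < θ := by rw [htab, div_lt_iff₀ hG]; linarith
            linarith
          · have : θ < tla := by rw [htla, lt_div_iff₀ h1]; linarith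
            linarith
      rw [hset, Real.volume_Ioo, ofReal_max_zero, min_eq_left hc]
    · push_neg at hc
      have hset : {θ : ℝ | θ ∈ Set.Icc (0:ℝ) 1 ∧
          θ * (B + G) - pa > max (θ * RL - pl) (θ * B)} = Set.Ioc tab 1 := by
        ext θ
        simp only [Set.mem_setOf_eq, Set.mem_Icc, Set.mem_Ioc, max_lt_iff, gt_iff_lt]
        constructor
        · rintro ⟨⟨h0, hu⟩, ha, hb⟩
          refine ⟨?_, hu⟩
          rw [htab, div_lt_iff₀ hG]; nlinarith
        · rintro ⟨ha, hu⟩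
          rw [htab, div_lt_iff₀ hG] at ha
          have hθla : θ < tla := lt_of_le_of_lt hu hc
          rw [htla, lt_div_iff₀ h1] at hθla
          have hθ0 : 0 < θ := by
            rcases mul_pos_iff.mp (lt_of_le_of_lt hpa ha) with ⟨h, _⟩ | ⟨_, h⟩
            · exact h
            · linarith
          have e1 : θ * (B + G) = θ * B + θ * G := by ring
          have e2 : θ * (RL - B - G) = θ * RL - θ * B - θ * G := by ring
          exact ⟨⟨hθ0.le, hu⟩, by linarith, by linarith⟩
      rw [hset, Real.volume_Ioc, ofReal_max_zero, min_eq_right hc.le]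
end

section
/- For any prices p_l ≥ 0 and p_a ≥ 0, the Stage-III update map h̃ maps Ω into Ω; that is, for every (x,y) ∈ Ω, the point h̃(x,y) = (max(1 − max(θ_la(x,y), θ_lb(x)), 0), max(min(θ_la(x,y), 1) − θ_ab(y), 0)) has both coordinates nonnegative and coordinate sum at most 1. -/
open Set

/-- The feasible set of market shares: Ω = {(x,y) : x ≥ 0, y ≥ 0, x + y ≤ 1}. -/
def Omega : Set (ℝ × ℝ) := {p | 0 ≤ p.1 ∧ 0 ≤ p.2 ∧ p.1 + p.2 ≤ 1}

/-- θ_lb(x) = p_l / (R_L − f(1−x)). -/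
noncomputable def thetaLB (RL : ℝ) (f : ℝ → ℝ) (pl : ℝ) (x : ℝ) : ℝ :=
  pl / (RL - f (1 - x))

/-- θ_ab(y) = p_a / g(y). -/
noncomputable def thetaAB (g : ℝ → ℝ) (pa : ℝ) (y : ℝ) : ℝ := pa / g y

/-- θ_la(x,y) = (p_l − p_a) / (R_L − f(1−x) − g(y)). -/
noncomputable def thetaLA (RL : ℝ) (f g : ℝ → ℝ) (pl pa : ℝ) (p : ℝ × ℝ) : ℝ :=
  (pl - pa) / (RL - f (1 - p.1) - g p.2)

/-- The Stage-III update map h̃. -/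
noncomputable def hmap (RL : ℝ) (f g : ℝ → ℝ) (pl pa : ℝ) (p : ℝ × ℝ) : ℝ × ℝ :=
  (max (1 - max (thetaLA RL f g pl pa p) (thetaLB RL f pl p.1)) 0,
   max (min (thetaLA RL f g pl pa p) 1 - thetaAB g pa p.2) 0)

/-- the Stage-III update map h̃ maps Ω into Ω. -/
theorem stmt3
    (RL : ℝ) (f g : ℝ → ℝ)
    (hf_cont : ContinuousOn f (Set.Icc 0 1))
    (hf_nonneg : ∀ t ∈ Set.Icc (0:ℝ) 1, 0 ≤ f t)
    (hf_anti : AntitoneOn f (Set.Icc 0 1))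
    (hg_cont : ContinuousOn g (Set.Icc 0 1))
    (hg_pos : ∀ t ∈ Set.Icc (0:ℝ) 1, 0 < g t)
    (hg_mono : MonotoneOn g (Set.Icc 0 1))
    (hRL : ∀ p ∈ Omega, f (1 - p.1) + g p.2 < RL)
    (pl pa : ℝ) (hpl : 0 ≤ pl) (hpa : 0 ≤ pa) :
    ∀ p ∈ Omega, hmap RL f g pl pa p ∈ Omega := by
  rintro ⟨x, y⟩ ⟨hx, hy, hxy⟩
  have hy1 : y ≤ 1 := by linarith
  have hgy : 0 < g y := hg_pos y ⟨hy, hy1⟩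
  have hR : f (1 - x) + g y < RL := hRL (x, y) ⟨hx, hy, hxy⟩
  set A := thetaLA RL f g pl pa (x, y) with hA
  set B := thetaLB RL f pl x with hBdef
  set C := thetaAB g pa y with hCdef
  have hB : 0 ≤ B := show (0:ℝ) ≤ pl / (RL - f (1 - x)) from div_nonneg hpl (by linarith)
  have hC : 0 ≤ C := show (0:ℝ) ≤ pa / g y from div_nonneg hpa hgy.le
  refine ⟨le_max_right _ _, le_max_right _ _, ?_⟩
  simp only [hmap]
  rcases le_or_gt (min A 1 - C) 0 with h | h
  · rw [max_eq_right h]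
    have h1 := le_max_right A B
    have : max (1 - max A B) 0 ≤ 1 := max_le (by linarith) (by norm_num)
    linarith
  · rw [max_eq_left h.le]
    rcases le_total (1 - max A B) 0 with h1 | h1
    · rw [max_eq_right h1]
      have := min_le_right A 1
      linarith
    · rw [max_eq_left h1]
      have h2 := le_max_left A B
      have h3 := min_le_left A 1
      linarith
end

section
/- (Existence part of Proposition 1.) For any prices p_l ≥ 0 and p_a ≥ 0, there exists at least one market equilibrium, i.e., a point (x*, y*) ∈ Ω with h̃(x*, y*) = (x*, y*). -/
open Set

/- For fixed `y`, the first coordinate of `H (·, y)` is antitone, so `x ↦ (H (x, y)).1`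
(clipped to `[0, 1 - y]`) has a fixed point `X y` which depends continuously on `y`.
The intermediate value theorem applied to `y ↦ (H (X y, y)).2` then yields a `y` at which
`(X y, y)` is fixed by `H`. -/

section FixedPoint

variable {T : Type*} [TopologicalSpace T] {s : Set T} {a b : ℝ} {Φ : ℝ × T → ℝ}

/- For `c ∈ [a, b]`, antitonicity gives `c < X t ↔ c < Φ (c, t)` and `X t < c ↔ Φ (c, t) < c`;
the right-hand sides are open conditions in `t`. -/
theorem continuousOn_of_isFixedPt_of_antitoneOn {X : T → ℝ}
    (hΦ : ContinuousOn Φ (Icc a b ×ˢ s))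
    (hanti : ∀ t ∈ s, AntitoneOn (fun x => Φ (x, t)) (Icc a b))
    (hX : ∀ t ∈ s, X t ∈ Icc a b ∧ Φ (X t, t) = X t) :
    ContinuousOn X s := by
  intro t₀ ht₀
  obtain ⟨hX₀, hfix₀⟩ := hX t₀ ht₀
  have hslice : ∀ c ∈ Icc a b, ContinuousWithinAt (fun t => Φ (c, t)) s t₀ := fun c hc =>
    hΦ.comp (continuousOn_const.prodMk continuousOn_id) (fun t ht => mk_mem_prod hc ht) t₀ ht₀
  refine tendsto_order.2 ⟨fun c hc => ?_, fun c hc => ?_⟩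
  · rcases lt_or_ge c a with hca | hac
    · exact eventually_nhdsWithin_of_forall fun t ht => hca.trans_le (hX t ht).1.1
    have hc' : c ∈ Icc a b := ⟨hac, hc.le.trans hX₀.2⟩
    have hlt₀ : c < Φ (c, t₀) := hc.trans_le (hfix₀.symm.trans_le (hanti t₀ ht₀ hc' hX₀ hc.le))
    filter_upwards [(hslice c hc').eventually (lt_mem_nhds hlt₀), self_mem_nhdsWithin]
      with t hlt ht
    by_contra! hle
    exact hlt.not_ge ((hanti t ht (hX t ht).1 hc' hle).trans ((hX t ht).2.trans_le hle))
  · rcases lt_or_ge b c with hbc | hcb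
    · exact eventually_nhdsWithin_of_forall fun t ht => (hX t ht).1.2.trans_lt hbc
    have hc' : c ∈ Icc a b := ⟨hX₀.1.trans hc.le, hcb⟩
    have hlt₀ : Φ (c, t₀) < c := ((hanti t₀ ht₀ hX₀ hc' hc.le).trans_eq hfix₀).trans_lt hc
    filter_upwards [(hslice c hc').eventually (gt_mem_nhds hlt₀), self_mem_nhdsWithin]
      with t hlt ht
    by_contra! hle
    exact hlt.not_ge (hle.trans ((hX t ht).2.symm.trans_le (hanti t ht hc' (hX t ht).1 hle)))

theorem exists_continuousOn_isFixedPt_of_antitoneOn (hab : a ≤ b)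
    (hΦ : ContinuousOn Φ (Icc a b ×ˢ s)) (hmaps : MapsTo Φ (Icc a b ×ˢ s) (Icc a b))
    (hanti : ∀ t ∈ s, AntitoneOn (fun x => Φ (x, t)) (Icc a b)) :
    ∃ X : T → ℝ, ContinuousOn X s ∧ ∀ t ∈ s, X t ∈ Icc a b ∧ Φ (X t, t) = X t := by
  have hfix : ∀ t ∈ s, ∃ x ∈ Icc a b, Φ (x, t) = x := fun t ht =>
    exists_mem_Icc_isFixedPt_of_mapsTo
      (hΦ.comp (continuousOn_id.prodMk continuousOn_const) (fun x hx => mk_mem_prod hx ht)) hab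
      (fun x hx => hmaps (mk_mem_prod hx ht))
  choose! X hXmem hXfix using hfix
  have hX : ∀ t ∈ s, X t ∈ Icc a b ∧ Φ (X t, t) = X t := fun t ht => ⟨hXmem t ht, hXfix t ht⟩
  exact ⟨X, continuousOn_of_isFixedPt_of_antitoneOn hΦ hanti hX, hX⟩

end FixedPoint

theorem mk_mem_Omega {x y : ℝ} (hx : x ∈ Icc 0 (1 - y)) (hy : 0 ≤ y) : (x, y) ∈ Omega :=
  ⟨hx.1, hy, by linarith [hx.2]⟩

theorem one_sub_fst_mem_Icc_of_mem_Omega {p : ℝ × ℝ} (hp : p ∈ Omega) :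
    1 - p.1 ∈ Icc (0 : ℝ) 1 :=
  ⟨by linarith [hp.2.1, hp.2.2], by linarith [hp.1]⟩

theorem snd_mem_Icc_of_mem_Omega {p : ℝ × ℝ} (hp : p ∈ Omega) : p.2 ∈ Icc (0 : ℝ) 1 :=
  ⟨hp.2.1, by linarith [hp.1, hp.2.2]⟩

theorem exists_isFixedPt_of_antitoneOn_fst {H : ℝ × ℝ → ℝ × ℝ} (hH : ContinuousOn H Omega)
    (hmaps : MapsTo H Omega Omega)
    (hanti : ∀ y ∈ Icc (0 : ℝ) 1, AntitoneOn (fun x => (H (x, y)).1) (Icc 0 (1 - y))) :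
    ∃ p ∈ Omega, Function.IsFixedPt H p := by
  set Q : Set (ℝ × ℝ) := Icc 0 1 ×ˢ Icc 0 1
  have hclip_mem : ∀ q ∈ Q, min q.1 (1 - q.2) ∈ Icc 0 (1 - q.2) := fun q hq =>
    ⟨le_min hq.1.1 (sub_nonneg.2 hq.2.2), min_le_right _ _⟩
  have hclip : MapsTo (fun q : ℝ × ℝ => (min q.1 (1 - q.2), q.2)) Q Omega := fun q hq =>
    mk_mem_Omega (hclip_mem q hq) hq.2.1
  set Φ : ℝ × ℝ → ℝ := fun q => min (H (min q.1 (1 - q.2), q.2)).1 (1 - q.2)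
  have hΦ : ContinuousOn Φ Q :=
    ((hH.comp (by fun_prop) hclip).fst).inf (continuousOn_const.sub continuousOn_snd)
  have hΦmaps : MapsTo Φ Q (Icc 0 1) := fun q hq =>
    ⟨le_min (hmaps (hclip hq)).1 (sub_nonneg.2 hq.2.2),
      (min_le_right _ _).trans (sub_le_self _ hq.2.1)⟩
  have hΦanti : ∀ y ∈ Icc (0 : ℝ) 1, AntitoneOn (fun x => Φ (x, y)) (Icc 0 1) :=
    fun y hy x₁ hx₁ x₂ hx₂ h => min_le_min_right _ <| hanti y hy
      (hclip_mem _ (mk_mem_prod hx₁ hy)) (hclip_mem _ (mk_mem_prod hx₂ hy)) (min_le_min_right _ h)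
  obtain ⟨X, hXc, hX⟩ := exists_continuousOn_isFixedPt_of_antitoneOn zero_le_one hΦ hΦmaps hΦanti
  have hX_le : ∀ y ∈ Icc (0 : ℝ) 1, X y ≤ 1 - y := fun y hy =>
    (hX y hy).2 ▸ min_le_right _ _
  have hXΩ : MapsTo (fun y => (X y, y)) (Icc 0 1) Omega := fun y hy =>
    mk_mem_Omega ⟨(hX y hy).1.1, hX_le y hy⟩ hy.1
  obtain ⟨y, hy, hfix⟩ := exists_mem_Icc_isFixedPt_of_mapsTo (f := fun y => (H (X y, y)).2)
    (hH.comp (hXc.prodMk continuousOn_id) hXΩ).snd zero_le_one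
    (fun y hy => ⟨(hmaps (hXΩ hy)).2.1, by linarith [(hmaps (hXΩ hy)).1, (hmaps (hXΩ hy)).2.2]⟩)
  have hsnd : (H (X y, y)).2 = y := hfix
  have hfst_le : (H (X y, y)).1 ≤ 1 - y := by linarith [(hmaps (hXΩ hy)).2.2]
  refine ⟨(X y, y), hXΩ hy, Prod.ext ?_ hsnd⟩
  simpa only [Φ, min_eq_left (hX_le y hy), min_eq_left hfst_le] using (hX y hy).2

section Market

variable {RL : ℝ} {f g : ℝ → ℝ} {pl pa : ℝ}

theorem thetaLA_denom_pos (hRL : ∀ p ∈ Omega, f (1 - p.1) + g p.2 < RL) {p : ℝ × ℝ}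
    (hp : p ∈ Omega) : 0 < RL - f (1 - p.1) - g p.2 := by
  linarith [hRL p hp]

theorem thetaLB_denom_pos (hg_pos : ∀ t ∈ Icc (0 : ℝ) 1, 0 < g t)
    (hRL : ∀ p ∈ Omega, f (1 - p.1) + g p.2 < RL) {p : ℝ × ℝ} (hp : p ∈ Omega) :
    0 < RL - f (1 - p.1) := by
  linarith [hRL p hp, hg_pos _ (snd_mem_Icc_of_mem_Omega hp)]

theorem continuousOn_hmap (hf_cont : ContinuousOn f (Icc 0 1))
    (hg_cont : ContinuousOn g (Icc 0 1)) (hg_pos : ∀ t ∈ Icc (0 : ℝ) 1, 0 < g t)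
    (hRL : ∀ p ∈ Omega, f (1 - p.1) + g p.2 < RL) :
    ContinuousOn (hmap RL f g pl pa) Omega := by
  have hf : ContinuousOn (fun p : ℝ × ℝ => f (1 - p.1)) Omega :=
    hf_cont.comp (by fun_prop) fun p hp => one_sub_fst_mem_Icc_of_mem_Omega hp
  have hg : ContinuousOn (fun p : ℝ × ℝ => g p.2) Omega :=
    hg_cont.comp continuousOn_snd fun p hp => snd_mem_Icc_of_mem_Omega hp
  have hLA : ContinuousOn (thetaLA RL f g pl pa) Omega :=
    continuousOn_const.div ((continuousOn_const.sub hf).sub hg)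
      fun p hp => (thetaLA_denom_pos hRL hp).ne'
  have hLB : ContinuousOn (fun p : ℝ × ℝ => thetaLB RL f pl p.1) Omega :=
    continuousOn_const.div (continuousOn_const.sub hf)
      fun p hp => (thetaLB_denom_pos hg_pos hRL hp).ne'
  have hAB : ContinuousOn (fun p : ℝ × ℝ => thetaAB g pa p.2) Omega :=
    continuousOn_const.div hg fun p hp => (hg_pos _ (snd_mem_Icc_of_mem_Omega hp)).ne'
  exact ((continuousOn_const.sub (hLA.sup hLB)).sup continuousOn_const).prodMk
    (((hLA.inf continuousOn_const).sub hAB).sup continuousOn_const)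

theorem mapsTo_hmap_Omega (hg_pos : ∀ t ∈ Icc (0 : ℝ) 1, 0 < g t)
    (hRL : ∀ p ∈ Omega, f (1 - p.1) + g p.2 < RL) (hpl : 0 ≤ pl) (hpa : 0 ≤ pa) :
    MapsTo (hmap RL f g pl pa) Omega Omega := by
  intro p hp
  set A := thetaLA RL f g pl pa p
  set M := max A (thetaLB RL f pl p.1)
  have hM : 0 ≤ M :=
    le_max_of_le_right (div_nonneg hpl (thetaLB_denom_pos hg_pos hRL hp).le)
  have hAB : 0 ≤ thetaAB g pa p.2 := div_nonneg hpa (hg_pos _ (snd_mem_Icc_of_mem_Omega hp)).le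
  have hsnd : (hmap RL f g pl pa p).2 ≤ min M 1 :=
    max_le (by linarith [min_le_min_right 1 (le_max_left A (thetaLB RL f pl p.1))])
      (le_min hM zero_le_one)
  have hfst : (hmap RL f g pl pa p).1 = 1 - min M 1 := by
    rcases le_total M 1 with h | h <;> simp [hmap, M, A, h]
  exact ⟨le_max_right _ _, le_max_right _ _, by linarith⟩

theorem antitoneOn_hmap_fst (hf_anti : AntitoneOn f (Icc 0 1))
    (hg_pos : ∀ t ∈ Icc (0 : ℝ) 1, 0 < g t) (hRL : ∀ p ∈ Omega, f (1 - p.1) + g p.2 < RL)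
    (hpl : 0 ≤ pl) {y : ℝ} (hy : y ∈ Icc (0 : ℝ) 1) :
    AntitoneOn (fun x => (hmap RL f g pl pa (x, y)).1) (Icc 0 (1 - y)) := by
  intro x₁ hx₁ x₂ hx₂ h
  have hp₁ := mk_mem_Omega hx₁ hy.1
  have hp₂ := mk_mem_Omega hx₂ hy.1
  have hf₁₂ : f (1 - x₁) ≤ f (1 - x₂) := hf_anti (one_sub_fst_mem_Icc_of_mem_Omega hp₂)
    (one_sub_fst_mem_Icc_of_mem_Omega hp₁) (by linarith)
  have hLB₂ := thetaLB_denom_pos hg_pos hRL hp₂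
  have hLB : thetaLB RL f pl x₁ ≤ thetaLB RL f pl x₂ :=
    div_le_div_of_nonneg_left hpl hLB₂ (by linarith)
  have hLA : thetaLA RL f g pl pa (x₁, y) ≤
      max (thetaLA RL f g pl pa (x₂, y)) (thetaLB RL f pl x₂) := by
    rcases le_total pa pl with hpa | hpa
    · exact le_max_of_le_left <| div_le_div_of_nonneg_left (sub_nonneg.2 hpa)
        (thetaLA_denom_pos hRL hp₂) (by linarith)
    · exact le_max_of_le_right ((div_nonpos_of_nonpos_of_nonneg (sub_nonpos.2 hpa)
        (thetaLA_denom_pos hRL hp₁).le).trans (div_nonneg hpl hLB₂.le))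
  exact max_le_max_right 0 (sub_le_sub_left (max_le hLA (le_max_of_le_right hLB)) 1)

end Market

theorem stmt4_general
    (RL : ℝ) (f g : ℝ → ℝ)
    (hf_cont : ContinuousOn f (Set.Icc 0 1))
    (hf_anti : AntitoneOn f (Set.Icc 0 1))
    (hg_cont : ContinuousOn g (Set.Icc 0 1))
    (hg_pos : ∀ t ∈ Set.Icc (0:ℝ) 1, 0 < g t)
    (hRL : ∀ p ∈ Omega, f (1 - p.1) + g p.2 < RL)
    (pl pa : ℝ) (hpl : 0 ≤ pl) (hpa : 0 ≤ pa) :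
    ∃ p ∈ Omega, hmap RL f g pl pa p = p :=
  exists_isFixedPt_of_antitoneOn_fst (continuousOn_hmap hf_cont hg_cont hg_pos hRL)
    (mapsTo_hmap_Omega hg_pos hRL hpl hpa)
    fun _ hy => antitoneOn_hmap_fst hf_anti hg_pos hRL hpl hy

/-- existence part of Proposition 1: for any nonnegative prices there exists
at least one market equilibrium, i.e. a fixed point of h̃ in Ω. -/
theorem stmt4
    (RL : ℝ) (f g : ℝ → ℝ)
    (hf_cont : ContinuousOn f (Set.Icc 0 1))
    (hf_nonneg : ∀ t ∈ Set.Icc (0:ℝ) 1, 0 ≤ f t)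
    (hf_anti : AntitoneOn f (Set.Icc 0 1))
    (hg_cont : ContinuousOn g (Set.Icc 0 1))
    (hg_pos : ∀ t ∈ Set.Icc (0:ℝ) 1, 0 < g t)
    (hg_mono : MonotoneOn g (Set.Icc 0 1))
    (hRL : ∀ p ∈ Omega, f (1 - p.1) + g p.2 < RL)
    (pl pa : ℝ) (hpl : 0 ≤ pl) (hpa : 0 ≤ pa) :
    ∃ p ∈ Omega, hmap RL f g pl pa p = p :=
  stmt4_general RL f g hf_cont hf_anti hg_cont hg_pos hRL pl pa hpl hpa
end

section
/- (Theorem 1, case (b).) Assume f and g are continuously differentiable on [0,1], p_l ≥ p_a ≥ 0, p_l − p_a ≤ R_L − f(0) − g(1), the uniqueness condition holds (sup over (x,y) ∈ Ω of (g'(y)/g(y))·(R_L − f(1−x))/(R_L − f(1−x) − g(y)) < 1/κ with κ = sup over Ω of max{(p_l − p_a)/(R_L − f(1−x) − g(y)), p_a/g(y)}), and that θ_lb(x) > θ_ab(y) for all (x,y) ∈ Ω. Then the unique market equilibrium (x*, y*) satisfies x* = 1 − θ_la(x*, y*) and y* = θ_la(x*, y*) − θ_ab(y*). -/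
open Set Topology Filter

lemma deriv_nonneg_of_monoOn {g g' : ℝ → ℝ}
    (hd : ∀ t ∈ Set.Icc (0:ℝ) 1, HasDerivWithinAt g (g' t) (Set.Icc 0 1) t)
    (hmono : MonotoneOn g (Set.Icc 0 1)) :
    ∀ t ∈ Set.Icc (0:ℝ) 1, 0 ≤ g' t := by
  intro t ht
  have h := hasDerivWithinAt_iff_tendsto_slope.1 (hd t ht)
  rcases lt_or_ge t 1 with h1 | h1
  · have hsub : Set.Ioc t 1 ⊆ Set.Icc (0:ℝ) 1 \ {t} := by
      intro u hu
      exact ⟨⟨le_trans ht.1 hu.1.le, hu.2⟩, (ne_of_gt hu.1)⟩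
    have hne : (𝓝[Set.Ioc t 1] t).NeBot := left_nhdsWithin_Ioc_neBot h1
    have h2 : Filter.Tendsto (slope g t) (𝓝[Set.Ioc t 1] t) (𝓝 (g' t)) :=
      h.mono_left (nhdsWithin_mono t hsub)
    refine ge_of_tendsto h2 ?_
    filter_upwards [self_mem_nhdsWithin] with u hu
    rw [slope_def_field]
    apply div_nonneg
    · have := hmono ht ⟨le_trans ht.1 hu.1.le, hu.2⟩ hu.1.le
      linarith
    · linarith [hu.1]
  · have ht1 : t = 1 := le_antisymm ht.2 h1
    have h0 : (0:ℝ) < t := by rw [ht1]; norm_num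
    have hsub : Set.Ico 0 t ⊆ Set.Icc (0:ℝ) 1 \ {t} := by
      intro u hu
      exact ⟨⟨hu.1, le_trans hu.2.le (by rw [ht1])⟩, ne_of_lt hu.2⟩
    have hne : (𝓝[Set.Ico 0 t] t).NeBot := right_nhdsWithin_Ico_neBot h0
    have h2 : Filter.Tendsto (slope g t) (𝓝[Set.Ico 0 t] t) (𝓝 (g' t)) :=
      h.mono_left (nhdsWithin_mono t hsub)
    refine ge_of_tendsto h2 ?_
    filter_upwards [self_mem_nhdsWithin] with u hu
    rw [slope_def_field]
    apply div_nonneg_of_nonpos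
    · have := hmono ⟨hu.1, le_trans hu.2.le (by rw [ht1])⟩ ht hu.2.le
      linarith
    · linarith [hu.2]

lemma deriv_nonpos_of_antiOn {f f' : ℝ → ℝ}
    (hd : ∀ t ∈ Set.Icc (0:ℝ) 1, HasDerivWithinAt f (f' t) (Set.Icc 0 1) t)
    (hanti : AntitoneOn f (Set.Icc 0 1)) :
    ∀ t ∈ Set.Icc (0:ℝ) 1, f' t ≤ 0 := by
  intro t ht
  have h := deriv_nonneg_of_monoOn (g := fun u => -f u) (g' := fun u => -f' u)
    (fun u hu => (hd u hu).neg) (fun a ha b hb hab => by simpa using hanti ha hb hab) t ht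
  simpa using h

/-- The auxiliary function s(y) = y + pa/g(y). -/
noncomputable def sfun (g : ℝ → ℝ) (pa : ℝ) (y : ℝ) : ℝ := y + pa / g y

/-- The auxiliary 1-D function G(y) = s(y) − (pl−pa)/(RL − f(s(y)) − g(y)). -/
noncomputable def Gfun (RL : ℝ) (f g : ℝ → ℝ) (pl pa : ℝ) (y : ℝ) : ℝ :=
  sfun g pa y - (pl - pa) / (RL - f (sfun g pa y) - g y)

/-- Theorem 1, case (b): if θ_lb > θ_ab throughout Ω, the unique market
equilibrium (x*,y*) satisfies x* = 1 − θ_la(x*,y*) and y* = θ_la(x*,y*) − θ_ab(y*). -/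
theorem stmt7
    (RL : ℝ) (f g : ℝ → ℝ) (f' g' : ℝ → ℝ)
    (hf_cont : ContinuousOn f (Set.Icc 0 1))
    (hf_nonneg : ∀ t ∈ Set.Icc (0:ℝ) 1, 0 ≤ f t)
    (hf_anti : AntitoneOn f (Set.Icc 0 1))
    (hg_cont : ContinuousOn g (Set.Icc 0 1))
    (hg_pos : ∀ t ∈ Set.Icc (0:ℝ) 1, 0 < g t)
    (hg_mono : MonotoneOn g (Set.Icc 0 1))
    (hRL : ∀ p ∈ Omega, f (1 - p.1) + g p.2 < RL)
    -- f and g are continuously differentiable on [0,1], with derivatives f' and g'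
    (hf' : ∀ t ∈ Set.Icc (0:ℝ) 1, HasDerivWithinAt f (f' t) (Set.Icc 0 1) t)
    (hf'_cont : ContinuousOn f' (Set.Icc 0 1))
    (hg' : ∀ t ∈ Set.Icc (0:ℝ) 1, HasDerivWithinAt g (g' t) (Set.Icc 0 1) t)
    (hg'_cont : ContinuousOn g' (Set.Icc 0 1))
    (pl pa : ℝ) (hpa : 0 ≤ pa) (hplpa : pa ≤ pl)
    (hgap : pl - pa ≤ RL - f 0 - g 1)
    -- the uniqueness condition
    (hcond :
      sSup ((fun p : ℝ × ℝ =>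
          (g' p.2 / g p.2) * ((RL - f (1 - p.1)) / (RL - f (1 - p.1) - g p.2))) '' Omega)
        < 1 / sSup ((fun p : ℝ × ℝ =>
          max ((pl - pa) / (RL - f (1 - p.1) - g p.2)) (pa / g p.2)) '' Omega))
    -- case (b): θ_lb(x) > θ_ab(y) for all (x,y) ∈ Ω
    (hcase : ∀ p ∈ Omega, thetaLB RL f pl p.1 > thetaAB g pa p.2) :
    ∃ pstar ∈ Omega, hmap RL f g pl pa pstar = pstar ∧
      (∀ q ∈ Omega, hmap RL f g pl pa q = q → q = pstar) ∧
      pstar.1 = 1 - thetaLA RL f g pl pa pstar ∧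
      pstar.2 = thetaLA RL f g pl pa pstar - thetaAB g pa pstar.2 := by
  -- basic membership facts
  have hmem2 : ∀ p : ℝ × ℝ, p ∈ Omega → p.2 ∈ Icc (0:ℝ) 1 ∧ (1 - p.1) ∈ Icc (0:ℝ) 1 := by
    rintro p ⟨h1, h2, h3⟩
    exact ⟨⟨h2, by linarith⟩, ⟨by linarith, by linarith⟩⟩
  have hgp : ∀ p ∈ Omega, 0 < g p.2 := fun p hp => hg_pos _ (hmem2 p hp).1
  have hDp : ∀ p ∈ Omega, 0 < RL - f (1 - p.1) - g p.2 := by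
    intro p hp; have := hRL p hp; linarith
  have hEp : ∀ p ∈ Omega, 0 < RL - f (1 - p.1) := by
    intro p hp; have := hDp p hp; have := hgp p hp; linarith
  have hg'nn : ∀ t ∈ Set.Icc (0:ℝ) 1, 0 ≤ g' t := deriv_nonneg_of_monoOn hg' hg_mono
  have hf'np : ∀ t ∈ Set.Icc (0:ℝ) 1, f' t ≤ 0 := deriv_nonpos_of_antiOn hf' hf_anti
  -- Omega is compact
  have hOsub : Omega ⊆ Set.Icc ((0:ℝ),(0:ℝ)) (1,1) := by
    rintro p ⟨h1, h2, h3⟩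
    simp only [Set.mem_Icc, Prod.le_def]
    exact ⟨⟨h1, h2⟩, ⟨by linarith, by linarith⟩⟩
  have hOclosed : IsClosed Omega := by
    have : Omega = {p : ℝ × ℝ | 0 ≤ p.1} ∩ ({p | 0 ≤ p.2} ∩ {p | p.1 + p.2 ≤ 1}) := by
      rfl
    rw [this]
    exact (isClosed_le continuous_const continuous_fst).inter
      ((isClosed_le continuous_const continuous_snd).inter
        (isClosed_le (continuous_fst.add continuous_snd) continuous_const))
  have hOcomp : IsCompact Omega := IsCompact.of_isClosed_subset isCompact_Icc hOclosed hOsub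
  have hO00 : ((0:ℝ), (0:ℝ)) ∈ Omega := ⟨le_rfl, le_rfl, by norm_num⟩
  -- continuity of the sup-condition functions on Omega
  have hmapsto1 : Set.MapsTo (fun p : ℝ × ℝ => 1 - p.1) Omega (Set.Icc 0 1) :=
    fun p hp => (hmem2 p hp).2
  have hmapsto2 : Set.MapsTo (fun p : ℝ × ℝ => p.2) Omega (Set.Icc 0 1) :=
    fun p hp => (hmem2 p hp).1
  have hcf : ContinuousOn (fun p : ℝ × ℝ => f (1 - p.1)) Omega :=
    hf_cont.comp (continuous_const.sub continuous_fst).continuousOn hmapsto1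
  have hcg : ContinuousOn (fun p : ℝ × ℝ => g p.2) Omega :=
    hg_cont.comp continuous_snd.continuousOn hmapsto2
  have hcg' : ContinuousOn (fun p : ℝ × ℝ => g' p.2) Omega :=
    hg'_cont.comp continuous_snd.continuousOn hmapsto2
  -- key pointwise inequality from the uniqueness condition
  have hstar : ∀ p ∈ Omega,
      (g' p.2 / g p.2) * ((RL - f (1 - p.1)) / (RL - f (1 - p.1) - g p.2)) *
        max ((pl - pa) / (RL - f (1 - p.1) - g p.2)) (pa / g p.2) < 1 := by
    set a : ℝ × ℝ → ℝ := fun p =>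
      (g' p.2 / g p.2) * ((RL - f (1 - p.1)) / (RL - f (1 - p.1) - g p.2)) with ha_def
    set b : ℝ × ℝ → ℝ := fun p =>
      max ((pl - pa) / (RL - f (1 - p.1) - g p.2)) (pa / g p.2) with hb_def
    have hacont : ContinuousOn a Omega := by
      apply ContinuousOn.mul
      · exact hcg'.div hcg (fun p hp => (hgp p hp).ne')
      · exact (continuousOn_const.sub hcf).div
          ((continuousOn_const.sub hcf).sub hcg) (fun p hp => (hDp p hp).ne')
    have hbcont : ContinuousOn b Omega := by
      apply ContinuousOn.sup
      · exact continuousOn_const.div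
          ((continuousOn_const.sub hcf).sub hcg) (fun p hp => (hDp p hp).ne')
      · exact continuousOn_const.div hcg (fun p hp => (hgp p hp).ne')
    have hA : BddAbove (a '' Omega) := (hOcomp.image_of_continuousOn hacont).bddAbove
    have hB : BddAbove (b '' Omega) := (hOcomp.image_of_continuousOn hbcont).bddAbove
    have hann : ∀ p ∈ Omega, 0 ≤ a p := by
      intro p hp
      apply mul_nonneg
      · exact div_nonneg (hg'nn _ (hmem2 p hp).1) (hgp p hp).le
      · exact div_nonneg (hEp p hp).le (hDp p hp).le
    have hbnn : ∀ p ∈ Omega, 0 ≤ b p := by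
      intro p hp
      exact le_trans (div_nonneg hpa (hgp p hp).le) (le_max_right _ _)
    have hsa : 0 ≤ sSup (a '' Omega) :=
      le_trans (hann _ hO00) (le_csSup hA ⟨_, hO00, rfl⟩)
    have hsb0 : 0 ≤ sSup (b '' Omega) :=
      le_trans (hbnn _ hO00) (le_csSup hB ⟨_, hO00, rfl⟩)
    have hsb : 0 < sSup (b '' Omega) := by
      rcases hsb0.lt_or_eq with h | h
      · exact h
      · exfalso; rw [← h] at hcond; simp at hcond; linarith
    have hABlt : sSup (a '' Omega) * sSup (b '' Omega) < 1 := by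
      have := (lt_div_iff₀ hsb).1 hcond
      linarith
    intro p hp
    calc a p * b p ≤ sSup (a '' Omega) * sSup (b '' Omega) := by
          apply mul_le_mul (le_csSup hA ⟨p, hp, rfl⟩) (le_csSup hB ⟨p, hp, rfl⟩)
            (hbnn p hp) hsa
      _ < 1 := hABlt
  -- gap inequality on Omega
  have hgap' : ∀ p ∈ Omega, pl - pa ≤ RL - f (1 - p.1) - g p.2 := by
    intro p hp
    have h1 : f (1 - p.1) ≤ f 0 :=
      hf_anti (left_mem_Icc.2 zero_le_one) (hmem2 p hp).2 (hmem2 p hp).2.1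
    have h2 : g p.2 ≤ g 1 :=
      hg_mono (hmem2 p hp).1 (right_mem_Icc.2 zero_le_one) (hmem2 p hp).1.2
    linarith
  have hla_le_one : ∀ p ∈ Omega, thetaLA RL f g pl pa p ≤ 1 := by
    intro p hp
    exact (div_le_one (hDp p hp)).2 (hgap' p hp)
  have hlb_lt_la : ∀ p ∈ Omega, thetaLB RL f pl p.1 < thetaLA RL f g pl pa p := by
    intro p hp
    have hc := hcase p hp
    unfold thetaLB thetaAB at hc
    rw [gt_iff_lt, div_lt_div_iff₀ (hgp p hp) (hEp p hp)] at hc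
    unfold thetaLB thetaLA
    rw [div_lt_div_iff₀ (hEp p hp) (hDp p hp)]
    nlinarith [hgp p hp, hEp p hp, hDp p hp]
  have hab_lt_la : ∀ p ∈ Omega, thetaAB g pa p.2 < thetaLA RL f g pl pa p :=
    fun p hp => lt_trans (hcase p hp) (hlb_lt_la p hp)
  have hab_nn : ∀ p ∈ Omega, 0 ≤ thetaAB g pa p.2 :=
    fun p hp => div_nonneg hpa (hgp p hp).le
  -- simplification of hmap on Omega
  have hsimp : ∀ p ∈ Omega, hmap RL f g pl pa p =
      (1 - thetaLA RL f g pl pa p, thetaLA RL f g pl pa p - thetaAB g pa p.2) := by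
    intro p hp
    unfold hmap
    rw [max_eq_left (hlb_lt_la p hp).le, min_eq_left (hla_le_one p hp),
      max_eq_left (by linarith [hla_le_one p hp] : (0:ℝ) ≤ 1 - thetaLA RL f g pl pa p),
      max_eq_left (by linarith [hab_lt_la p hp] :
        (0:ℝ) ≤ thetaLA RL f g pl pa p - thetaAB g pa p.2)]
  -- the function s
  have hscont : ContinuousOn (sfun g pa) (Icc 0 1) := by
    unfold sfun
    exact continuousOn_id.add (continuousOn_const.div hg_cont
      (fun t ht => (hg_pos t ht).ne'))
  have hsderiv : ∀ y ∈ Icc (0:ℝ) 1,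
      HasDerivWithinAt (sfun g pa) (1 - pa * g' y / g y ^ 2) (Icc 0 1) y := by
    intro y hy
    have h1 : HasDerivWithinAt (fun y => pa / g y)
        ((0 * g y - pa * g' y) / g y ^ 2) (Icc 0 1) y :=
      (hasDerivWithinAt_const y _ pa).div (hg' y hy) (hg_pos y hy).ne'
    have h2 := (hasDerivWithinAt_id y (Icc (0:ℝ) 1)).add h1
    have : (1:ℝ) + (0 * g y - pa * g' y) / g y ^ 2 = 1 - pa * g' y / g y ^ 2 := by ring
    rw [this] at h2
    exact h2
  have hspos : ∀ y ∈ Icc (0:ℝ) 1, 0 < 1 - pa * g' y / g y ^ 2 := by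
    intro y hy
    have hp0 : ((0:ℝ), y) ∈ Omega :=
      ⟨le_rfl, hy.1, by show (0:ℝ) + y ≤ 1; linarith [hy.2]⟩
    have hk := hstar _ hp0
    dsimp only at hk
    have hgy := hg_pos y hy
    have hg'y := hg'nn y hy
    have hE := hEp _ hp0
    have hD := hDp _ hp0
    have h1 : g' y / g y ≤ g' y / g y * ((RL - f (1 - (0:ℝ))) / (RL - f (1 - (0:ℝ)) - g y)) := by
      apply le_mul_of_one_le_right (div_nonneg hg'y hgy.le)
      rw [le_div_iff₀ hD]
      simp only [one_mul]
      linarith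
    have h2 : pa / g y ≤ max ((pl - pa) / (RL - f (1 - (0:ℝ)) - g y)) (pa / g y) :=
      le_max_right _ _
    have h3 : (g' y / g y) * (pa / g y) ≤
        g' y / g y * ((RL - f (1 - (0:ℝ))) / (RL - f (1 - (0:ℝ)) - g y)) *
          max ((pl - pa) / (RL - f (1 - (0:ℝ)) - g y)) (pa / g y) :=
      mul_le_mul h1 h2 (div_nonneg hpa hgy.le)
        (by positivity)
    have h4 : pa * g' y / g y ^ 2 = (g' y / g y) * (pa / g y) := by
      field_simp
    rw [h4]
    linarith [lt_of_le_of_lt h3 hk]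
  have hsmono : StrictMonoOn (sfun g pa) (Icc 0 1) := by
    apply strictMonoOn_of_deriv_pos (convex_Icc 0 1) hscont
    intro y hy
    rw [interior_Icc] at hy
    have hyI : y ∈ Icc (0:ℝ) 1 := Ioo_subset_Icc_self hy
    have hd := (hsderiv y hyI).hasDerivAt (Icc_mem_nhds hy.1 hy.2)
    rw [hd.deriv]
    exact hspos y hyI
  -- s 0 < 1
  have hs0lt1 : sfun g pa 0 < 1 := by
    have h1 := hcase _ hO00
    have h2 := hlb_lt_la _ hO00
    have h3 := hla_le_one _ hO00
    unfold thetaAB at h1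
    dsimp only at h1 h2 h3
    unfold sfun
    linarith
  have hs1ge : (1:ℝ) ≤ sfun g pa 1 := by
    unfold sfun
    have := div_nonneg hpa (hg_pos 1 (right_mem_Icc.2 zero_le_one)).le
    linarith
  -- find y₁ with s y₁ = 1
  obtain ⟨y₁, hy₁I, hy₁⟩ : ∃ y₁ ∈ Icc (0:ℝ) 1, sfun g pa y₁ = 1 := by
    have := intermediate_value_Icc (zero_le_one) hscont
    have h1 : (1:ℝ) ∈ Icc (sfun g pa 0) (sfun g pa 1) := ⟨hs0lt1.le, hs1ge⟩
    obtain ⟨y₁, hmem, heq⟩ := this h1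
    exact ⟨y₁, hmem, heq⟩
  have hy₁pos : 0 < y₁ := by
    rcases hy₁I.1.lt_or_eq with h | h
    · exact h
    · exfalso; rw [← h] at hy₁; linarith
  have hy₁Icc0 : y₁ ∈ Icc (0:ℝ) y₁ := ⟨hy₁pos.le, le_rfl⟩
  have hsubI : Icc (0:ℝ) y₁ ⊆ Icc (0:ℝ) 1 := Icc_subset_Icc le_rfl hy₁I.2
  -- facts for y ∈ [0, y₁]
  have hsle1 : ∀ y ∈ Icc (0:ℝ) y₁, sfun g pa y ≤ 1 := by
    intro y hy
    have := hsmono.monotoneOn (hsubI hy) hy₁I hy.2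
    linarith [hy₁ ▸ this]
  have hs0le : ∀ y ∈ Icc (0:ℝ) y₁, 0 ≤ sfun g pa y := by
    intro y hy
    unfold sfun
    have := div_nonneg hpa (hg_pos y (hsubI hy)).le
    linarith [hy.1]
  have hyles : ∀ y ∈ Icc (0:ℝ) y₁, y ≤ sfun g pa y := by
    intro y hy
    unfold sfun
    have := div_nonneg hpa (hg_pos y (hsubI hy)).le
    linarith
  have hP : ∀ y ∈ Icc (0:ℝ) y₁, ((1 - sfun g pa y, y) : ℝ × ℝ) ∈ Omega := by
    intro y hy
    refine ⟨?_, hy.1, ?_⟩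
    · show (0:ℝ) ≤ 1 - sfun g pa y
      linarith [hsle1 y hy]
    · show 1 - sfun g pa y + y ≤ 1
      linarith [hyles y hy]
  have hDv : ∀ y ∈ Icc (0:ℝ) y₁, 0 < RL - f (sfun g pa y) - g y := by
    intro y hy
    have := hDp _ (hP y hy)
    simp only [sub_sub_cancel] at this
    exact this
  -- continuity of G on [0, y₁]
  have hsmapsto : Set.MapsTo (sfun g pa) (Icc 0 y₁) (Icc 0 1) :=
    fun y hy => ⟨hs0le y hy, hsle1 y hy⟩
  have hGcont : ContinuousOn (Gfun RL f g pl pa) (Icc 0 y₁) := by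
    unfold Gfun
    apply ContinuousOn.sub (hscont.mono hsubI)
    apply ContinuousOn.div continuousOn_const
    · exact (continuousOn_const.sub
        (hf_cont.comp (hscont.mono hsubI) hsmapsto)).sub (hg_cont.mono hsubI)
    · exact fun y hy => (hDv y hy).ne'
  -- endpoint values of G
  have h0mem : (0:ℝ) ∈ Icc (0:ℝ) y₁ := ⟨le_rfl, hy₁pos.le⟩
  have hG0 : Gfun RL f g pl pa 0 < 0 := by
    have hP0 := hP 0 h0mem
    have h2 := hab_lt_la _ hP0
    unfold thetaAB thetaLA at h2
    dsimp only at h2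
    simp only [sub_sub_cancel] at h2
    have hs0 : sfun g pa 0 = pa / g 0 := by unfold sfun; ring
    unfold Gfun
    rw [hs0] at h2 ⊢
    linarith
  have hGy₁ : 0 ≤ Gfun RL f g pl pa y₁ := by
    have h3 := hla_le_one _ (hP y₁ hy₁Icc0)
    unfold thetaLA at h3
    dsimp only at h3
    simp only [sub_sub_cancel] at h3
    unfold Gfun
    rw [hy₁] at h3 ⊢
    linarith
  -- existence of a root of G
  obtain ⟨ys, hysI, hys⟩ : ∃ ys ∈ Icc (0:ℝ) y₁, Gfun RL f g pl pa ys = 0 := by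
    have := intermediate_value_Icc hy₁pos.le hGcont
    have h1 : (0:ℝ) ∈ Icc (Gfun RL f g pl pa 0) (Gfun RL f g pl pa y₁) := ⟨hG0.le, hGy₁⟩
    obtain ⟨ys, hmem, heq⟩ := this h1
    exact ⟨ys, hmem, heq⟩
  -- strict monotonicity of G
  have hGmono : StrictMonoOn (Gfun RL f g pl pa) (Icc 0 y₁) := by
    apply strictMonoOn_of_deriv_pos (convex_Icc 0 y₁) hGcont
    intro y hy
    rw [interior_Icc] at hy
    have hyIcc : y ∈ Icc (0:ℝ) y₁ := Ioo_subset_Icc_self hy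
    have hyI1 : y ∈ Icc (0:ℝ) 1 := hsubI hyIcc
    have hyIoo : y ∈ Ioo (0:ℝ) 1 := ⟨hy.1, lt_of_lt_of_le hy.2 hy₁I.2⟩
    have hsy1 : sfun g pa y < 1 := by
      have h := hsmono hyI1 hy₁I hy.2
      rw [hy₁] at h; exact h
    have hsy0 : 0 < sfun g pa y := lt_of_lt_of_le hy.1 (hyles y hyIcc)
    have hsyIoo : sfun g pa y ∈ Ioo (0:ℝ) 1 := ⟨hsy0, hsy1⟩
    -- derivatives
    have hgy : HasDerivAt g (g' y) y :=
      (hg' y hyI1).hasDerivAt (Icc_mem_nhds hyIoo.1 hyIoo.2)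
    have hsy : HasDerivAt (sfun g pa) (1 - pa * g' y / g y ^ 2) y :=
      (hsderiv y hyI1).hasDerivAt (Icc_mem_nhds hyIoo.1 hyIoo.2)
    have hfy : HasDerivAt f (f' (sfun g pa y)) (sfun g pa y) :=
      (hf' _ (Ioo_subset_Icc_self hsyIoo)).hasDerivAt (Icc_mem_nhds hsyIoo.1 hsyIoo.2)
    have hfs : HasDerivAt (fun y => f (sfun g pa y))
        (f' (sfun g pa y) * (1 - pa * g' y / g y ^ 2)) y := hfy.comp y hsy
    have hden : HasDerivAt (fun y => RL - f (sfun g pa y) - g y)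
        (0 - f' (sfun g pa y) * (1 - pa * g' y / g y ^ 2) - g' y) y :=
      ((hasDerivAt_const y RL).sub hfs).sub hgy
    have hDvy : 0 < RL - f (sfun g pa y) - g y := hDv y hyIcc
    have hquot : HasDerivAt (fun y => (pl - pa) / (RL - f (sfun g pa y) - g y))
        ((0 * (RL - f (sfun g pa y) - g y) -
          (pl - pa) * (0 - f' (sfun g pa y) * (1 - pa * g' y / g y ^ 2) - g' y)) /
            (RL - f (sfun g pa y) - g y) ^ 2) y :=
      (hasDerivAt_const y (pl - pa)).div hden hDvy.ne'
    have hG : HasDerivAt (Gfun RL f g pl pa)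
        ((1 - pa * g' y / g y ^ 2) -
          (0 * (RL - f (sfun g pa y) - g y) -
            (pl - pa) * (0 - f' (sfun g pa y) * (1 - pa * g' y / g y ^ 2) - g' y)) /
              (RL - f (sfun g pa y) - g y) ^ 2) y := by
      unfold Gfun
      exact hsy.sub hquot
    rw [hG.deriv]
    -- positivity of the derivative
    have hsdpos : 0 < 1 - pa * g' y / g y ^ 2 := hspos y hyI1
    have hgy0 := hg_pos y hyI1
    have hgne : g y ≠ 0 := hgy0.ne'
    have hg'y := hg'nn y hyI1
    have hf'sy : f' (sfun g pa y) ≤ 0 := hf'np _ (Ioo_subset_Icc_self hsyIoo)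
    have hDne : RL - f (sfun g pa y) - g y ≠ 0 := hDvy.ne'
    -- use the key inequality at the point (1 - s y, y)
    have hPy := hP y hyIcc
    have hk := hstar _ hPy
    dsimp only at hk
    simp only [sub_sub_cancel] at hk
    have hm1 : (pl - pa) / (RL - f (sfun g pa y) - g y) ≤
        max ((pl - pa) / (RL - f (sfun g pa y) - g y)) (pa / g y) := le_max_left _ _
    have hm2 : pa / g y ≤
        max ((pl - pa) / (RL - f (sfun g pa y) - g y)) (pa / g y) := le_max_right _ _
    have hmnn : 0 ≤ max ((pl - pa) / (RL - f (sfun g pa y) - g y)) (pa / g y) :=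
      le_trans (div_nonneg hpa hgy0.le) hm2
    have e1 : pa * g' y / g y ^ 2 ≤
        max ((pl - pa) / (RL - f (sfun g pa y) - g y)) (pa / g y) * (g' y / g y) := by
      have h4 : pa * g' y / g y ^ 2 = pa / g y * (g' y / g y) := by
        rw [div_mul_div_comm, ← pow_two]
      rw [h4]
      exact mul_le_mul_of_nonneg_right hm2 (div_nonneg hg'y hgy0.le)
    have e2 : (pl - pa) * g' y / (RL - f (sfun g pa y) - g y) ^ 2 ≤
        max ((pl - pa) / (RL - f (sfun g pa y) - g y)) (pa / g y) *
          (g' y / (RL - f (sfun g pa y) - g y)) := by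
      have h4 : (pl - pa) * g' y / (RL - f (sfun g pa y) - g y) ^ 2 =
          (pl - pa) / (RL - f (sfun g pa y) - g y) *
            (g' y / (RL - f (sfun g pa y) - g y)) := by
        rw [div_mul_div_comm, ← pow_two]
      rw [h4]
      exact mul_le_mul_of_nonneg_right hm1 (div_nonneg hg'y hDvy.le)
    have e3 : max ((pl - pa) / (RL - f (sfun g pa y) - g y)) (pa / g y) * (g' y / g y) +
        max ((pl - pa) / (RL - f (sfun g pa y) - g y)) (pa / g y) *
          (g' y / (RL - f (sfun g pa y) - g y)) =
        g' y / g y * ((RL - f (sfun g pa y)) / (RL - f (sfun g pa y) - g y)) *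
          max ((pl - pa) / (RL - f (sfun g pa y) - g y)) (pa / g y) := by
      field_simp
      ring
    have key : pa * g' y / g y ^ 2 +
        (pl - pa) * g' y / (RL - f (sfun g pa y) - g y) ^ 2 < 1 := by
      calc pa * g' y / g y ^ 2 + (pl - pa) * g' y / (RL - f (sfun g pa y) - g y) ^ 2
          ≤ max ((pl - pa) / (RL - f (sfun g pa y) - g y)) (pa / g y) * (g' y / g y) +
            max ((pl - pa) / (RL - f (sfun g pa y) - g y)) (pa / g y) *
              (g' y / (RL - f (sfun g pa y) - g y)) := add_le_add e1 e2
        _ = g' y / g y * ((RL - f (sfun g pa y)) / (RL - f (sfun g pa y) - g y)) *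
              max ((pl - pa) / (RL - f (sfun g pa y) - g y)) (pa / g y) := e3
        _ < 1 := hk
    have hterm : (pl - pa) * f' (sfun g pa y) * (1 - pa * g' y / g y ^ 2) /
        (RL - f (sfun g pa y) - g y) ^ 2 ≤ 0 := by
      apply div_nonpos_of_nonpos_of_nonneg
      · exact mul_nonpos_of_nonpos_of_nonneg
          (mul_nonpos_of_nonneg_of_nonpos (by linarith) hf'sy) hsdpos.le
      · positivity
    have hexp : (0 * (RL - f (sfun g pa y) - g y) -
        (pl - pa) * (0 - f' (sfun g pa y) * (1 - pa * g' y / g y ^ 2) - g' y)) /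
          (RL - f (sfun g pa y) - g y) ^ 2 =
        (pl - pa) * f' (sfun g pa y) * (1 - pa * g' y / g y ^ 2) /
          (RL - f (sfun g pa y) - g y) ^ 2 +
        (pl - pa) * g' y / (RL - f (sfun g pa y) - g y) ^ 2 := by
      ring
    rw [hexp]
    linarith [key, hterm]
  -- assemble the equilibrium point
  set pstar : ℝ × ℝ := (1 - sfun g pa ys, ys) with hpstar_def
  have hPstar : pstar ∈ Omega := hP ys hysI
  have hθ : thetaLA RL f g pl pa pstar = sfun g pa ys := by
    unfold thetaLA
    simp only [hpstar_def, sub_sub_cancel]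
    unfold Gfun at hys
    linarith
  have hθab : thetaAB g pa pstar.2 = pa / g ys := by
    unfold thetaAB; rfl
  have hfix : hmap RL f g pl pa pstar = pstar := by
    rw [hsimp pstar hPstar]
    have h1 : 1 - thetaLA RL f g pl pa pstar = pstar.1 := by
      rw [hθ]
    have h2 : thetaLA RL f g pl pa pstar - thetaAB g pa pstar.2 = pstar.2 := by
      rw [hθ, hθab]
      show sfun g pa ys - pa / g ys = ys
      unfold sfun; ring
    rw [h1, h2]
  refine ⟨pstar, hPstar, hfix, ?_, ?_, ?_⟩
  · -- uniqueness
    intro q hq hfixq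
    rw [hsimp q hq] at hfixq
    have eq1 : 1 - thetaLA RL f g pl pa q = q.1 := congrArg Prod.fst hfixq
    have eq2 : thetaLA RL f g pl pa q - thetaAB g pa q.2 = q.2 := congrArg Prod.snd hfixq
    have hq2I : q.2 ∈ Icc (0:ℝ) 1 := (hmem2 q hq).1
    have hsq : sfun g pa q.2 = thetaLA RL f g pl pa q := by
      unfold sfun
      unfold thetaAB at eq2
      linarith
    have h1q : 1 - q.1 = sfun g pa q.2 := by rw [hsq]; linarith
    have hsqle1 : sfun g pa q.2 ≤ 1 := by
      rw [← h1q]; linarith [hq.1]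
    have hq2le : q.2 ≤ y₁ := by
      by_contra hcon
      push_neg at hcon
      have := hsmono hy₁I hq2I hcon
      rw [hy₁] at this
      linarith
    have hq2Icc : q.2 ∈ Icc (0:ℝ) y₁ := ⟨hq2I.1, hq2le⟩
    have hGq : Gfun RL f g pl pa q.2 = 0 := by
      unfold Gfun
      rw [hsq]
      have : f (thetaLA RL f g pl pa q) = f (1 - q.1) := by rw [← hsq, ← h1q]
      rw [this]
      unfold thetaLA
      ring
    have hq2ys : q.2 = ys := hGmono.injOn hq2Icc hysI (hGq.trans hys.symm)
    have hq1 : q.1 = pstar.1 := by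
      have : q.1 = 1 - sfun g pa q.2 := by linarith [h1q]
      rw [this, hq2ys]
    exact Prod.ext hq1 hq2ys
  · -- x* = 1 - θ_la
    show pstar.1 = 1 - thetaLA RL f g pl pa pstar
    rw [hθ]
  · -- y* = θ_la - θ_ab
    show pstar.2 = thetaLA RL f g pl pa pstar - thetaAB g pa pstar.2
    rw [hθ, hθab]
    show ys = sfun g pa ys - pa / g ys
    unfold sfun; ring
end

section
/- (Price inversion underlying Proposition 2.) For any (x,y) ∈ Ω, set p_l = P_l(x,y) = (1−x)(R_L − f(1−x) − g(y)) + (1−x−y)·g(y) and p_a = P_a(x,y) = (1−x−y)·g(y). Then p_l ≥ p_a ≥ 0, θ_la(x,y) = 1 − x, θ_ab(y) = 1 − x − y, θ_lb(x) ≤ θ_la(x,y), and (x,y) is a market equilibrium for the prices (p_l, p_a), i.e., h̃(x,y) = (x,y). -/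
open Set

/-!
With `s = 1 - x`, `t = 1 - x - y`, `D = R_L - f(1-x) - g(y) > 0` and `G = g(y) > 0` the prices are
`p_l = s D + t G` and `p_a = t G`, so `θ_la = (p_l - p_a) / D = s` and `θ_ab = p_a / G = t`
exactly, while `θ_lb = p_l / (D + G) ≤ s` because `t ≤ s`. Hence the outer `max` in `h̃` picks
`θ_la`, and `h̃(x,y) = (1 - s, s - t) = (x, y)`.
-/

lemma thetaLA_eq_of_sub_eq_mul {RL : ℝ} {f g : ℝ → ℝ} {pl pa : ℝ} {p : ℝ × ℝ} {s : ℝ}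
    (hD : RL - f (1 - p.1) - g p.2 ≠ 0) (h : pl - pa = s * (RL - f (1 - p.1) - g p.2)) :
    thetaLA RL f g pl pa p = s := by
  rw [thetaLA, h, mul_div_cancel_right₀ _ hD]

lemma thetaAB_eq_of_eq_mul {g : ℝ → ℝ} {pa y t : ℝ} (hg : g y ≠ 0) (h : pa = t * g y) :
    thetaAB g pa y = t := by
  rw [thetaAB, h, mul_div_cancel_right₀ _ hg]

lemma thetaLB_le_of_le_mul {RL : ℝ} {f : ℝ → ℝ} {pl x s : ℝ} (hE : 0 < RL - f (1 - x))
    (h : pl ≤ s * (RL - f (1 - x))) : thetaLB RL f pl x ≤ s := by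
  rwa [thetaLB, div_le_iff₀ hE]

lemma hmap_eq_self {RL : ℝ} {f g : ℝ → ℝ} {pl pa x y : ℝ} (hx : 0 ≤ x) (hy : 0 ≤ y)
    (hla : thetaLA RL f g pl pa (x, y) = 1 - x) (hab : thetaAB g pa y = 1 - x - y)
    (hlb : thetaLB RL f pl x ≤ 1 - x) :
    hmap RL f g pl pa (x, y) = (x, y) := by
  have hmin : min (1 - x) 1 = 1 - x := min_eq_left (by linarith)
  simp only [hmap, hla, hab, max_eq_left hlb, hmin, sub_sub_cancel,
    max_eq_left hx, max_eq_left hy]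

theorem stmt8_general
    (RL : ℝ) (f g : ℝ → ℝ)
    (hg_pos : ∀ t ∈ Set.Icc (0:ℝ) 1, 0 < g t)
    (hRL : ∀ p ∈ Omega, f (1 - p.1) + g p.2 < RL)
    (x y : ℝ) (hmem : (x, y) ∈ Omega)
    (pl pa : ℝ)
    (hpl : pl = (1 - x) * (RL - f (1 - x) - g y) + (1 - x - y) * g y)
    (hpa : pa = (1 - x - y) * g y) :
    pa ≤ pl ∧ 0 ≤ pa ∧
    thetaLA RL f g pl pa (x, y) = 1 - x ∧
    thetaAB g pa y = 1 - x - y ∧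
    thetaLB RL f pl x ≤ thetaLA RL f g pl pa (x, y) ∧
    hmap RL f g pl pa (x, y) = (x, y) := by
  obtain ⟨hx, hy, hxy⟩ := hmem
  have hG : 0 < g y := hg_pos y ⟨hy, by linarith⟩
  have hD : 0 < RL - f (1 - x) - g y := sub_pos.2 (lt_sub_iff_add_lt'.2 (hRL (x, y) ⟨hx, hy, hxy⟩))
  have hdiff : pl - pa = (1 - x) * (RL - f (1 - x) - g y) := by rw [hpl, hpa]; ring
  have hla := thetaLA_eq_of_sub_eq_mul (p := (x, y)) hD.ne' hdiff
  have hab := thetaAB_eq_of_eq_mul hG.ne' hpa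
  have hlb : thetaLB RL f pl x ≤ 1 - x :=
    thetaLB_le_of_le_mul (by linarith) (by rw [hpl]; nlinarith [mul_nonneg hy hG.le])
  refine ⟨?_, ?_, hla, hab, hla ▸ hlb, hmap_eq_self hx hy hla hab hlb⟩
  · exact sub_nonneg.1 (hdiff ▸ mul_nonneg (by linarith) hD.le)
  · exact hpa ▸ mul_nonneg (by linarith) hG.le

/-- price inversion underlying Proposition 2: the price functions
P_l(x,y) = (1−x)(R_L − f(1−x) − g(y)) + (1−x−y)g(y) and P_a(x,y) = (1−x−y)g(y)
make (x,y) a market equilibrium. -/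
theorem stmt8
    (RL : ℝ) (f g : ℝ → ℝ)
    (hf_cont : ContinuousOn f (Set.Icc 0 1))
    (hf_nonneg : ∀ t ∈ Set.Icc (0:ℝ) 1, 0 ≤ f t)
    (hf_anti : AntitoneOn f (Set.Icc 0 1))
    (hg_cont : ContinuousOn g (Set.Icc 0 1))
    (hg_pos : ∀ t ∈ Set.Icc (0:ℝ) 1, 0 < g t)
    (hg_mono : MonotoneOn g (Set.Icc 0 1))
    (hRL : ∀ p ∈ Omega, f (1 - p.1) + g p.2 < RL)
    (x y : ℝ) (hmem : (x, y) ∈ Omega)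
    (pl pa : ℝ)
    (hpl : pl = (1 - x) * (RL - f (1 - x) - g y) + (1 - x - y) * g y)
    (hpa : pa = (1 - x - y) * g y) :
    pa ≤ pl ∧ 0 ≤ pa ∧
    thetaLA RL f g pl pa (x, y) = 1 - x ∧
    thetaAB g pa y = 1 - x - y ∧
    thetaLB RL f pl x ≤ thetaLA RL f g pl pa (x, y) ∧
    hmap RL f g pl pa (x, y) = (x, y) :=
  stmt8_general RL f g hg_pos hRL x y hmem pl pa hpl hpa
end

section
/- (Proposition 3, licensee part.) Assume f is differentiable on [0,1] with f'(t) ≤ 0 and R_L > f(t) for all t ∈ [0,1], g(y) ≥ 0, c_l > 0, and δ ∈ [0,1). Fix y ∈ [0,1]. Then every maximizer x* of the licensee's payoff x ↦ U_sl(x,y) = (1−δ)·[x(1−x)(R_L − f(1−x)) − x·y·g(y) − c_l·x] over [0,1] satisfies x* < 1/2; that is, the licensee's market share at any best response is strictly less than one half. -/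
open Set

/-- Leasing price as a function of market shares:
P_l(x,y) = (1−x)(R_L − f(1−x) − g(y)) + (1−x−y)·g(y). -/
noncomputable def Pl (RL : ℝ) (f g : ℝ → ℝ) (x y : ℝ) : ℝ :=
  (1 - x) * (RL - f (1 - x) - g y) + (1 - x - y) * g y

/-- Information price as a function of market shares: P_a(x,y) = (1−x−y)·g(y). -/
noncomputable def Pa (g : ℝ → ℝ) (x y : ℝ) : ℝ := (1 - x - y) * g y

/-- Licensee's market-share payoff under the revenue-sharing scheme:
U_sl(x,y) = (P_l(x,y) − c_l)·x·(1−δ). -/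
noncomputable def Usl (RL : ℝ) (f g : ℝ → ℝ) (cl δ : ℝ) (x y : ℝ) : ℝ :=
  (Pl RL f g x y - cl) * x * (1 - δ)

/-- Database's market-share payoff under the revenue-sharing scheme:
U_db(x,y) = (P_a(x,y) − c_a)·y + (P_l(x,y) − c_l)·x·δ. -/
noncomputable def Udb (RL : ℝ) (f g : ℝ → ℝ) (ca cl δ : ℝ) (x y : ℝ) : ℝ :=
  (Pa g x y - ca) * y + (Pl RL f g x y - cl) * x * δ

/-- Licensee's market-share payoff under the wholesale-pricing scheme:
U_sl^{II}(x,y) = (P_l(x,y) − w − c_l)·x. -/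
noncomputable def UslII (RL : ℝ) (f g : ℝ → ℝ) (w cl : ℝ) (x y : ℝ) : ℝ :=
  (Pl RL f g x y - w - cl) * x

/-- Database's market-share payoff under the wholesale-pricing scheme:
U_db^{II}(x,y) = P_a(x,y)·y + w·x − c_a·y. -/
noncomputable def UdbII (g : ℝ → ℝ) (w ca : ℝ) (x y : ℝ) : ℝ :=
  Pa g x y * y + w * x - ca * y

/-!
Up to the factor `1 - δ > 0`, the payoff is `x(1-x)(R_L - f(1-x)) - c x` with
`c = y g(y) + c_l > 0`, and `f` is antitone since `f' ≤ 0`. Such a function is never maximized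
on `[0,1]` at a point `x ≥ 1/2`. For `x > 1/2` the reflected point `1 - x` has the same factor
`x(1-x)`, no smaller margin `R_L - f(x) ≥ R_L - f(1-x)`, and a strictly smaller cost. At
`x = 1/2`, moving to `1/2 - ε` saves `c ε` in cost and loses at most `ε² (R_L - f(1/2))` in
revenue.
-/

lemma antitoneOn_of_hasDerivWithinAt_self_nonpos {D : Set ℝ} (hD : Convex ℝ D) {f f' : ℝ → ℝ}
    (hf : ∀ x ∈ D, HasDerivWithinAt f (f' x) D x) (hf'₀ : ∀ x ∈ D, f' x ≤ 0) :
    AntitoneOn f D :=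
  antitoneOn_of_hasDerivWithinAt_nonpos hD (fun x hx ↦ (hf x hx).continuousWithinAt)
    (fun x hx ↦ (hf x (interior_subset hx)).mono interior_subset)
    (fun x hx ↦ hf'₀ x (interior_subset hx))

noncomputable def shareProfit (R : ℝ) (f : ℝ → ℝ) (c x : ℝ) : ℝ :=
  x * (1 - x) * (R - f (1 - x)) - c * x

lemma Usl_eq_mul_shareProfit (RL : ℝ) (f g : ℝ → ℝ) (cl δ x y : ℝ) :
    Usl RL f g cl δ x y = (1 - δ) * shareProfit RL f (y * g y + cl) x := by
  unfold Usl Pl shareProfit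
  ring

section shareProfit

variable {R c : ℝ} {f : ℝ → ℝ}

lemma shareProfit_lt_shareProfit_one_sub (hf : AntitoneOn f (Icc 0 1)) (hc : 0 < c)
    {x : ℝ} (hx : 1 / 2 < x) (hx1 : x ≤ 1) :
    shareProfit R f c x < shareProfit R f c (1 - x) := by
  have hfx : f x ≤ f (1 - x) :=
    hf ⟨by linarith, by linarith⟩ ⟨by linarith, hx1⟩ (by linarith)
  have hprod : 0 ≤ x * (1 - x) := mul_nonneg (by linarith) (by linarith)
  unfold shareProfit
  rw [sub_sub_cancel]
  nlinarith [mul_nonneg hprod (sub_nonneg.2 hfx)]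

lemma exists_shareProfit_half_lt (hf : AntitoneOn f (Icc 0 1)) (hc : 0 < c) :
    ∃ x ∈ Icc (0 : ℝ) 1, shareProfit R f c (1 / 2) < shareProfit R f c x := by
  set A := R - f (1 / 2)
  set ε := min (1 / 2) (c / (|A| + 1))
  have hε : 0 < ε := lt_min (by norm_num) (by positivity)
  have hε_half : ε ≤ 1 / 2 := min_le_left _ _
  have hεA : ε * A < c := calc
    ε * A ≤ ε * |A| := mul_le_mul_of_nonneg_left (le_abs_self A) hε.le
    _ < ε * (|A| + 1) := by gcongr; linarith
    _ ≤ c := (le_div_iff₀ (by positivity)).1 (min_le_right _ _)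
  refine ⟨1 / 2 - ε, ⟨by linarith, by linarith⟩, ?_⟩
  have hf_le : f (1 - (1 / 2 - ε)) ≤ f (1 / 2) :=
    hf ⟨by norm_num, by norm_num⟩ ⟨by linarith, by linarith⟩ (by linarith)
  have hprod : 0 ≤ (1 / 2 - ε) * (1 - (1 / 2 - ε)) := mul_nonneg (by linarith) (by linarith)
  unfold shareProfit
  nlinarith [mul_le_mul_of_nonneg_left (sub_le_sub_left hf_le R) hprod, mul_pos hε hε]

lemma exists_shareProfit_lt (hf : AntitoneOn f (Icc 0 1)) (hc : 0 < c)
    {x : ℝ} (hx : 1 / 2 ≤ x) (hx1 : x ≤ 1) :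
    ∃ x' ∈ Icc (0 : ℝ) 1, shareProfit R f c x < shareProfit R f c x' := by
  rcases hx.eq_or_lt with rfl | hx
  · exact exists_shareProfit_half_lt hf hc
  · exact ⟨1 - x, ⟨by linarith, by linarith⟩, shareProfit_lt_shareProfit_one_sub hf hc hx hx1⟩

end shareProfit

theorem stmt9_general
    (RL : ℝ) (f g : ℝ → ℝ) (f' : ℝ → ℝ)
    (hf' : ∀ t ∈ Set.Icc (0:ℝ) 1, HasDerivWithinAt f (f' t) (Set.Icc 0 1) t)
    (hf'_nonpos : ∀ t ∈ Set.Icc (0:ℝ) 1, f' t ≤ 0)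
    (cl δ : ℝ) (hcl : 0 < cl) (hδ1 : δ < 1)
    (y : ℝ) (hy : y ∈ Set.Icc (0:ℝ) 1) (hgy : 0 ≤ g y)
    (xstar : ℝ) (hx : xstar ∈ Set.Icc (0:ℝ) 1)
    (hmax : ∀ x ∈ Set.Icc (0:ℝ) 1, Usl RL f g cl δ x y ≤ Usl RL f g cl δ xstar y) :
    xstar < 1 / 2 := by
  by_contra! hhalf
  have hanti : AntitoneOn f (Icc 0 1) :=
    antitoneOn_of_hasDerivWithinAt_self_nonpos (convex_Icc 0 1) hf' hf'_nonpos
  have hc : 0 < y * g y + cl := by nlinarith [mul_nonneg hy.1 hgy]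
  obtain ⟨x, hxI, hlt⟩ := exists_shareProfit_lt (R := RL) hanti hc hhalf hx.2
  have hle := hmax x hxI
  rw [Usl_eq_mul_shareProfit, Usl_eq_mul_shareProfit] at hle
  exact (mul_lt_mul_of_pos_left hlt (sub_pos.2 hδ1)).not_ge hle

/-- Proposition 3, licensee part: every maximizer of the licensee's
payoff over [0,1] is strictly less than 1/2. -/
theorem stmt9
    (RL : ℝ) (f g : ℝ → ℝ) (f' : ℝ → ℝ)
    (hf' : ∀ t ∈ Set.Icc (0:ℝ) 1, HasDerivWithinAt f (f' t) (Set.Icc 0 1) t)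
    (hf'_nonpos : ∀ t ∈ Set.Icc (0:ℝ) 1, f' t ≤ 0)
    (hRL : ∀ t ∈ Set.Icc (0:ℝ) 1, f t < RL)
    (cl δ : ℝ) (hcl : 0 < cl) (hδ : 0 ≤ δ) (hδ1 : δ < 1)
    (y : ℝ) (hy : y ∈ Set.Icc (0:ℝ) 1) (hgy : 0 ≤ g y)
    (xstar : ℝ) (hx : xstar ∈ Set.Icc (0:ℝ) 1)
    (hmax : ∀ x ∈ Set.Icc (0:ℝ) 1, Usl RL f g cl δ x y ≤ Usl RL f g cl δ xstar y) :
    xstar < 1 / 2 :=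
  stmt9_general RL f g f' hf' hf'_nonpos cl δ hcl hδ1 y hy hgy xstar hx hmax
end

section
/- (Proposition 3, database part, first-order condition form.) Assume g is differentiable on [0,1] with g(t) > 0 and g'(t) ≥ 0 for all t ∈ [0,1], c_a > 0, and δ ∈ [0,1]. Fix x ∈ [0,1]. If y* ∈ [0,1] satisfies the first-order condition (1−x−y*)·(g(y*) + y*·g'(y*)) − y*·g(y*) − c_a − x·δ·g(y*) − x·y*·δ·g'(y*) = 0 (the stationarity condition of the database's payoff U_db(x,·) at y*), then x + y* < 1. -/
open Set

/-- Proposition 3, database part, first-order condition form: if y*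
satisfies the stationarity condition of the database's payoff U_db(x,·), then x + y* < 1. -/
theorem stmt10
    (RL : ℝ) (f g : ℝ → ℝ) (g' : ℝ → ℝ)
    (hg' : ∀ t ∈ Set.Icc (0:ℝ) 1, HasDerivWithinAt g (g' t) (Set.Icc 0 1) t)
    (hg_pos : ∀ t ∈ Set.Icc (0:ℝ) 1, 0 < g t)
    (hg'_nonneg : ∀ t ∈ Set.Icc (0:ℝ) 1, 0 ≤ g' t)
    (ca δ : ℝ) (hca : 0 < ca) (hδ : 0 ≤ δ) (hδ1 : δ ≤ 1)
    (x : ℝ) (hx : x ∈ Set.Icc (0:ℝ) 1)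
    (ystar : ℝ) (hy : ystar ∈ Set.Icc (0:ℝ) 1)
    (hFOC : (1 - x - ystar) * (g ystar + ystar * g' ystar) - ystar * g ystar - ca
        - x * δ * g ystar - x * ystar * δ * g' ystar = 0) :
    x + ystar < 1 := by
  by_contra h
  push_neg at h
  have hgy := hg_pos ystar hy
  have hg'y := hg'_nonneg ystar hy
  obtain ⟨hy0, hy1⟩ := hy
  obtain ⟨hx0, hx1⟩ := hx
  nlinarith [mul_nonneg hy0 hg'y, mul_nonneg (mul_nonneg hx0 hδ) hgy.le,
    mul_nonneg (mul_nonneg (mul_nonneg hx0 hy0) hδ) hg'y,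
    mul_nonneg hy0 hgy.le]
end

section
/- (Supermodularity step for the licensee under RSS.) Assume g is nonnegative and nondecreasing on [0,1] and δ ∈ [0,1]. Then the licensee's payoff U_sl has increasing differences in (−x, y): for all 0 ≤ x₁ ≤ x₂ ≤ 1 and 0 ≤ y₁ ≤ y₂ ≤ 1, U_sl(x₁, y₂) − U_sl(x₂, y₂) ≥ U_sl(x₁, y₁) − U_sl(x₂, y₁). -/
open Set

/-- supermodularity step for the licensee under RSS: U_sl has increasing
differences in (−x, y). -/
theorem stmt11
    (RL : ℝ) (f g : ℝ → ℝ)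
    (hg_nonneg : ∀ t ∈ Set.Icc (0:ℝ) 1, 0 ≤ g t)
    (hg_mono : MonotoneOn g (Set.Icc 0 1))
    (cl δ : ℝ) (hδ : 0 ≤ δ) (hδ1 : δ ≤ 1)
    (x₁ x₂ y₁ y₂ : ℝ)
    (hx₁ : 0 ≤ x₁) (hx12 : x₁ ≤ x₂) (hx₂ : x₂ ≤ 1)
    (hy₁ : 0 ≤ y₁) (hy12 : y₁ ≤ y₂) (hy₂ : y₂ ≤ 1) :
    Usl RL f g cl δ x₁ y₂ - Usl RL f g cl δ x₂ y₂ ≥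
      Usl RL f g cl δ x₁ y₁ - Usl RL f g cl δ x₂ y₁ := by
  have hy₁m : y₁ ∈ Set.Icc (0:ℝ) 1 := ⟨hy₁, hy12.trans hy₂⟩
  have hy₂m : y₂ ∈ Set.Icc (0:ℝ) 1 := ⟨hy₁.trans hy12, hy₂⟩
  have h1 : 0 ≤ g y₁ := hg_nonneg _ hy₁m
  have h2 : g y₁ ≤ g y₂ := hg_mono hy₁m hy₂m hy12
  have key : y₁ * g y₁ ≤ y₂ * g y₂ := by nlinarith
  simp only [Usl, Pl]
  nlinarith [mul_nonneg (mul_nonneg (sub_nonneg.mpr hx12) (sub_nonneg.mpr key)) (sub_nonneg.mpr hδ1)]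
end

section
/- (Supermodularity step for the database under RSS.) Assume g is nonnegative and nondecreasing on [0,1] and δ ∈ [0,1]. Then the database's payoff U_db has increasing differences in (−x, y): for all 0 ≤ x₁ ≤ x₂ ≤ 1 and 0 ≤ y₁ ≤ y₂ ≤ 1, U_db(x₁, y₂) − U_db(x₂, y₂) ≥ U_db(x₁, y₁) − U_db(x₂, y₁). -/
open Set

/-- supermodularity step for the database under RSS: U_db has increasing
differences in (−x, y). -/
theorem stmt12
    (RL : ℝ) (f g : ℝ → ℝ)
    (hg_nonneg : ∀ t ∈ Set.Icc (0:ℝ) 1, 0 ≤ g t)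
    (hg_mono : MonotoneOn g (Set.Icc 0 1))
    (ca cl δ : ℝ) (hδ : 0 ≤ δ) (hδ1 : δ ≤ 1)
    (x₁ x₂ y₁ y₂ : ℝ)
    (hx₁ : 0 ≤ x₁) (hx12 : x₁ ≤ x₂) (hx₂ : x₂ ≤ 1)
    (hy₁ : 0 ≤ y₁) (hy12 : y₁ ≤ y₂) (hy₂ : y₂ ≤ 1) :
    Udb RL f g ca cl δ x₁ y₂ - Udb RL f g ca cl δ x₂ y₂ ≥
      Udb RL f g ca cl δ x₁ y₁ - Udb RL f g ca cl δ x₂ y₁ := by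
  have h1 : g y₁ ≤ g y₂ := hg_mono ⟨hy₁, le_trans hy12 hy₂⟩ ⟨le_trans hy₁ hy12, hy₂⟩ hy12
  have h2 : 0 ≤ g y₁ := hg_nonneg y₁ ⟨hy₁, le_trans hy12 hy₂⟩
  have h3 : 0 ≤ g y₂ := hg_nonneg y₂ ⟨le_trans hy₁ hy12, hy₂⟩
  simp only [Udb, Pa, Pl]
  nlinarith [mul_nonneg (sub_nonneg.2 hx12) (sub_nonneg.2 hy12),
    mul_nonneg (mul_nonneg (sub_nonneg.2 hx12) (sub_nonneg.2 hy12)) h3,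
    mul_nonneg (mul_nonneg (sub_nonneg.2 hx12) hy₁) (sub_nonneg.2 h1),
    mul_nonneg hδ (mul_nonneg (mul_nonneg (sub_nonneg.2 hx12) (sub_nonneg.2 hy12)) h3),
    mul_nonneg hδ (mul_nonneg (mul_nonneg (sub_nonneg.2 hx12) hy₁) (sub_nonneg.2 h1))]
end

section
/- (Theorem 2, existence part, with the boundary properties of Proposition 3.) Assume f and g are differentiable on [0,1], f nonnegative, nonincreasing and convex on [0,1], g strictly positive, nondecreasing and concave on [0,1], R_L > f(1−x) + g(y) for all (x,y) ∈ Ω, c_l > 0, c_a > 0, and δ ∈ [0,1). Then there exists a market share equilibrium of the revenue-sharing market share competition game, i.e., a pair (x*, y*) such that x* maximizes U_sl(·, y*) over [0,1] and y* maximizes U_db(x*, ·) over [0,1]; moreover any such pair satisfies x* < 1/2 and x* + y* < 1 (in particular (x*, y*) ∈ Ω). -/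
open Set

open Set

noncomputable def amax (F : ℝ → ℝ) : ℝ :=
  sSup {x | x ∈ Set.Icc (0:ℝ) 1 ∧ ∀ z ∈ Set.Icc (0:ℝ) 1, F z ≤ F x}

lemma amax_spec (F : ℝ → ℝ) (hF : ContinuousOn F (Set.Icc 0 1)) :
    amax F ∈ Set.Icc (0:ℝ) 1 ∧ (∀ z ∈ Set.Icc (0:ℝ) 1, F z ≤ F (amax F)) ∧
      ∀ x, x ∈ Set.Icc (0:ℝ) 1 → (∀ z ∈ Set.Icc (0:ℝ) 1, F z ≤ F x) → x ≤ amax F := by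
  obtain ⟨x0, hx0, hmax⟩ :=
    isCompact_Icc.exists_isMaxOn (Set.nonempty_Icc.2 (by norm_num : (0:ℝ) ≤ 1)) hF
  have hSeq : {x | x ∈ Set.Icc (0:ℝ) 1 ∧ ∀ z ∈ Set.Icc (0:ℝ) 1, F z ≤ F x}
      = Set.Icc 0 1 ∩ F ⁻¹' (Set.Ici (F x0)) := by
    ext x
    constructor
    · rintro ⟨hx, h⟩; exact ⟨hx, h x0 hx0⟩
    · rintro ⟨hx, h⟩; exact ⟨hx, fun z hz => le_trans (hmax hz) h⟩
  have hclosed : IsClosed (Set.Icc (0:ℝ) 1 ∩ F ⁻¹' Set.Ici (F x0)) :=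
    hF.preimage_isClosed_of_isClosed isClosed_Icc isClosed_Ici
  have hcomp : IsCompact (Set.Icc (0:ℝ) 1 ∩ F ⁻¹' Set.Ici (F x0)) :=
    isCompact_Icc.of_isClosed_subset hclosed Set.inter_subset_left
  have hne : (Set.Icc (0:ℝ) 1 ∩ F ⁻¹' Set.Ici (F x0)).Nonempty := ⟨x0, hx0, Set.mem_preimage.2 (Set.mem_Ici.2 (le_refl _))⟩
  have hmem : amax F ∈ Set.Icc (0:ℝ) 1 ∩ F ⁻¹' Set.Ici (F x0) := by
    rw [amax, hSeq]; exact hcomp.sSup_mem hne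
  have hbdd : BddAbove (Set.Icc (0:ℝ) 1 ∩ F ⁻¹' Set.Ici (F x0)) := hcomp.bddAbove
  refine ⟨hmem.1, fun z hz => le_trans (hmax hz) hmem.2, fun x hx h => ?_⟩
  rw [amax, hSeq]
  exact le_csSup hbdd ⟨hx, h x0 hx0⟩

lemma amax_anti (F G : ℝ → ℝ) (hF : ContinuousOn F (Set.Icc 0 1))
    (hG : ContinuousOn G (Set.Icc 0 1)) (hGs : StrictMonoOn G (Set.Icc 0 1))
    {t t' : ℝ} (h : t ≤ t') :
    amax (fun x => F x - t' * G x) ≤ amax (fun x => F x - t * G x) := by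
  rcases eq_or_lt_of_le h with rfl | hlt
  · exact le_refl _
  · obtain ⟨hm1, hmax1, _⟩ := amax_spec (fun x => F x - t * G x)
      (hF.sub (continuousOn_const.mul hG))
    obtain ⟨hm2, hmax2, _⟩ := amax_spec (fun x => F x - t' * G x)
      (hF.sub (continuousOn_const.mul hG))
    set m := amax (fun x => F x - t * G x)
    set m' := amax (fun x => F x - t' * G x)
    by_contra hc
    push_neg at hc
    have h1 : F m' - t * G m' ≤ F m - t * G m := hmax1 m' hm2
    have h2 : F m - t' * G m ≤ F m' - t' * G m' := hmax2 m hm1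
    have hGlt : G m < G m' := hGs hm1 hm2 hc
    nlinarith [mul_pos (sub_pos.2 hlt) (sub_pos.2 hGlt)]

-- identities
lemma Usl_eq (RL : ℝ) (f g : ℝ → ℝ) (cl δ x y : ℝ) :
    Usl RL f g cl δ x y
      = (1 - δ) * (x * ((1 - x) * (RL - f (1 - x))) - (y * g y + cl) * x) := by
  unfold Usl Pl; ring

lemma Udb_eq (RL : ℝ) (f g : ℝ → ℝ) (ca cl δ x y : ℝ) :
    Udb RL f g ca cl δ x y
      = ((y * g y * (1 - y) - ca * y) - (x * (1 + δ)) * (y * g y))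
        + δ * x * ((1 - x) * (RL - f (1 - x)) - cl) := by
  unfold Udb Pa Pl; ring

lemma bdry (RL : ℝ) (f g : ℝ → ℝ)
    (hf_anti : AntitoneOn f (Set.Icc 0 1))
    (hg_pos : ∀ t ∈ Set.Icc (0:ℝ) 1, 0 < g t)
    (hRL : ∀ p ∈ Omega, f (1 - p.1) + g p.2 < RL)
    (cl ca δ : ℝ) (hcl : 0 < cl) (hca : 0 < ca) (hδ : 0 ≤ δ) (hδ1 : δ < 1)
    (xs ys : ℝ) (hxs : xs ∈ Set.Icc (0:ℝ) 1) (hys : ys ∈ Set.Icc (0:ℝ) 1)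
    (hx : ∀ x ∈ Set.Icc (0:ℝ) 1, Usl RL f g cl δ x ys ≤ Usl RL f g cl δ xs ys)
    (hy : ∀ y ∈ Set.Icc (0:ℝ) 1, Udb RL f g ca cl δ xs y ≤ Udb RL f g ca cl δ xs ys) :
    xs < 1 / 2 ∧ xs + ys < 1 := by
  have h1δ : (0:ℝ) < 1 - δ := by linarith
  set b : ℝ := ys * g ys + cl with hb_def
  have hb : 0 < b := by
    have := hg_pos ys hys
    have := hys.1
    nlinarith
  have hψ : ∀ x ∈ Set.Icc (0:ℝ) 1,
      x * ((1 - x) * (RL - f (1 - x))) - b * x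
        ≤ xs * ((1 - xs) * (RL - f (1 - xs))) - b * xs := by
    intro x hx'
    have h := hx x hx'
    rw [Usl_eq, Usl_eq] at h
    rw [← hb_def] at h
    exact le_of_mul_le_mul_left h h1δ
  have hxhalf : xs < 1 / 2 := by
    by_contra hc
    push_neg at hc
    rcases eq_or_lt_of_le hc with heq | hlt
    · -- xs = 1/2
      have hC : 0 < RL - f (1/2) := by
        have h := hRL (1/2, 0) ⟨by norm_num, le_refl 0, by norm_num⟩
        have hg0 := hg_pos 0 (by norm_num)
        simp only at h
        have he : (1:ℝ) - 1/2 = 1/2 := by norm_num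
        rw [he] at h
        linarith
      obtain ⟨ε, hε, hε2, key⟩ :
          ∃ ε : ℝ, 0 < ε ∧ ε ≤ 1/2 ∧ ε * (RL - f (1/2)) ≤ b / 2 := by
        refine ⟨min (1/2) (b / (2 * (RL - f (1/2)))), lt_min (by norm_num) (by positivity),
          min_le_left _ _, ?_⟩
        have h2C : (0:ℝ) < 2 * (RL - f (1/2)) := by linarith
        have hε3 : min (1/2) (b / (2 * (RL - f (1/2)))) ≤ b / (2 * (RL - f (1/2))) :=
          min_le_right _ _
        have h' : min (1/2) (b / (2 * (RL - f (1/2)))) * (2 * (RL - f (1/2))) ≤ b := by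
          calc min (1/2) (b / (2 * (RL - f (1/2)))) * (2 * (RL - f (1/2)))
              ≤ (b / (2 * (RL - f (1/2)))) * (2 * (RL - f (1/2))) :=
                mul_le_mul_of_nonneg_right hε3 (by linarith)
            _ = b := by field_simp
        nlinarith [h']
      have hmem : (1/2 - ε) ∈ Set.Icc (0:ℝ) 1 := ⟨by linarith, by linarith⟩
      have h := hψ (1/2 - ε) hmem
      rw [← heq] at h
      have e1 : (1:ℝ) - (1/2 - ε) = 1/2 + ε := by ring
      have e2 : (1:ℝ) - 1/2 = 1/2 := by norm_num
      rw [e1, e2] at h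
      have hf_ineq : f (1/2 + ε) ≤ f (1/2) :=
        hf_anti ⟨by norm_num, by norm_num⟩ ⟨by linarith, by linarith⟩ (by linarith)
      nlinarith [mul_le_mul_of_nonneg_left hf_ineq
          (show (0:ℝ) ≤ 1/4 - ε^2 by nlinarith),
        mul_pos hε hb, sq_nonneg ε, mul_le_mul_of_nonneg_left key hε.le]
    · -- 1/2 < xs
      have hmem : (1 - xs) ∈ Set.Icc (0:ℝ) 1 := ⟨by linarith [hxs.2], by linarith [hxs.1]⟩
      have h := hψ (1 - xs) hmem
      have e1 : (1:ℝ) - (1 - xs) = xs := by ring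
      rw [e1] at h
      have hf_ineq : f xs ≤ f (1 - xs) :=
        hf_anti hmem hxs (by linarith)
      nlinarith [mul_pos hb (show (0:ℝ) < 2*xs - 1 by linarith),
        mul_nonneg (mul_nonneg hxs.1 (show (0:ℝ) ≤ 1 - xs by linarith [hxs.2]))
          (show (0:ℝ) ≤ f (1 - xs) - f xs by linarith)]
  refine ⟨hxhalf, ?_⟩
  by_contra hc
  push_neg at hc
  have hχ := hy 0 ⟨le_refl 0, by norm_num⟩
  rw [Udb_eq, Udb_eq] at hχ
  have hys_pos : 0 < ys := by linarith [hxs.2]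
  have hgys := hg_pos ys hys
  have hysg : 0 ≤ ys * g ys := mul_nonneg hys_pos.le hgys.le
  have t1 : ys * g ys * (1 - ys - xs) ≤ 0 :=
    mul_nonpos_of_nonneg_of_nonpos hysg (by linarith)
  have t2 : 0 ≤ δ * (xs * (ys * g ys)) := mul_nonneg hδ (mul_nonneg hxs.1 hysg)
  have t3 : 0 < ca * ys := mul_pos hca hys_pos
  nlinarith

lemma ygy_strictMono (g : ℝ → ℝ) (hg_pos : ∀ t ∈ Set.Icc (0:ℝ) 1, 0 < g t)
    (hg_mono : MonotoneOn g (Set.Icc 0 1)) :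
    StrictMonoOn (fun y : ℝ => y * g y) (Set.Icc 0 1) := by
  intro a ha b hb hab
  have h1 : g a ≤ g b := hg_mono ha hb hab.le
  have h2 : 0 < g b := hg_pos b hb
  have h3 : 0 ≤ a := ha.1
  simp only
  nlinarith

lemma exists_eq_stmt13 (RL : ℝ) (f g : ℝ → ℝ)
    (hf_diff : DifferentiableOn ℝ f (Set.Icc 0 1))
    (hg_diff : DifferentiableOn ℝ g (Set.Icc 0 1))
    (hg_pos : ∀ t ∈ Set.Icc (0:ℝ) 1, 0 < g t)
    (hg_mono : MonotoneOn g (Set.Icc 0 1))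
    (cl ca δ : ℝ) (hδ : 0 ≤ δ) (hδ1 : δ < 1) :
    ∃ xs ys : ℝ, xs ∈ Set.Icc (0:ℝ) 1 ∧ ys ∈ Set.Icc (0:ℝ) 1 ∧
      (∀ x ∈ Set.Icc (0:ℝ) 1, Usl RL f g cl δ x ys ≤ Usl RL f g cl δ xs ys) ∧
      (∀ y ∈ Set.Icc (0:ℝ) 1, Udb RL f g ca cl δ xs y ≤ Udb RL f g ca cl δ xs ys) := by
  have hfc : ContinuousOn (fun x : ℝ => f (1 - x)) (Set.Icc 0 1) :=
    hf_diff.continuousOn.comp (continuousOn_const.sub continuousOn_id)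
      (fun x hx => ⟨by simp; linarith [hx.2], by simp; linarith [hx.1]⟩)
  have hgc : ContinuousOn g (Set.Icc 0 1) := hg_diff.continuousOn
  have hF1c : ContinuousOn (fun x : ℝ => x * ((1 - x) * (RL - f (1 - x)))) (Set.Icc 0 1) :=
    continuousOn_id.mul ((continuousOn_const.sub continuousOn_id).mul
      (continuousOn_const.sub hfc))
  have hGyc : ContinuousOn (fun y : ℝ => y * g y) (Set.Icc 0 1) := continuousOn_id.mul hgc
  have hF2c : ContinuousOn (fun y : ℝ => y * g y * (1 - y) - ca * y) (Set.Icc 0 1) :=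
    (hGyc.mul (continuousOn_const.sub continuousOn_id)).sub
      (continuousOn_const.mul continuousOn_id)
  have hGs : StrictMonoOn (fun y : ℝ => y * g y) (Set.Icc 0 1) :=
    ygy_strictMono g hg_pos hg_mono
  set xbr : ℝ → ℝ :=
    fun b => amax (fun x => x * ((1 - x) * (RL - f (1 - x))) - b * x) with hxbr_def
  set ybr : ℝ → ℝ :=
    fun l => amax (fun y => (y * g y * (1 - y) - ca * y) - l * (y * g y)) with hybr_def
  have hxbr_spec : ∀ b : ℝ, xbr b ∈ Set.Icc (0:ℝ) 1 ∧
      ∀ z ∈ Set.Icc (0:ℝ) 1,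
        z * ((1 - z) * (RL - f (1 - z))) - b * z
          ≤ xbr b * ((1 - xbr b) * (RL - f (1 - xbr b))) - b * xbr b := by
    intro b
    have h := amax_spec (fun x => x * ((1 - x) * (RL - f (1 - x))) - b * x)
      (hF1c.sub (continuousOn_const.mul continuousOn_id))
    exact ⟨h.1, h.2.1⟩
  have hybr_spec : ∀ l : ℝ, ybr l ∈ Set.Icc (0:ℝ) 1 ∧
      ∀ z ∈ Set.Icc (0:ℝ) 1,
        (z * g z * (1 - z) - ca * z) - l * (z * g z)
          ≤ (ybr l * g (ybr l) * (1 - ybr l) - ca * ybr l) - l * (ybr l * g (ybr l)) := by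
    intro l
    have h := amax_spec (fun y => (y * g y * (1 - y) - ca * y) - l * (y * g y))
      (hF2c.sub (continuousOn_const.mul hGyc))
    exact ⟨h.1, h.2.1⟩
  have hxbr_anti : ∀ b b' : ℝ, b ≤ b' → xbr b' ≤ xbr b := fun b b' h =>
    amax_anti (fun x => x * ((1 - x) * (RL - f (1 - x)))) (fun x => x) hF1c
      continuousOn_id (fun a _ c _ hac => hac) h
  have hybr_anti : ∀ l l' : ℝ, l ≤ l' → ybr l' ≤ ybr l := fun l l' h =>
    amax_anti (fun y => y * g y * (1 - y) - ca * y) (fun y => y * g y) hF2c hGyc hGs h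
  set Phi : ℝ → ℝ :=
    fun x => xbr (ybr (x * (1 + δ)) * g (ybr (x * (1 + δ))) + cl) with hPhi_def
  have hPhi_mono : Monotone Phi := by
    intro x x' hxx'
    have h1 : x * (1 + δ) ≤ x' * (1 + δ) := by nlinarith
    have h2 : ybr (x' * (1 + δ)) ≤ ybr (x * (1 + δ)) := hybr_anti _ _ h1
    have h3 := (hybr_spec (x * (1 + δ))).1
    have h3' := (hybr_spec (x' * (1 + δ))).1
    have h4 : ybr (x' * (1 + δ)) * g (ybr (x' * (1 + δ)))
        ≤ ybr (x * (1 + δ)) * g (ybr (x * (1 + δ))) := by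
      rcases eq_or_lt_of_le h2 with he | hlt
      · rw [he]
      · exact (hGs h3' h3 hlt).le
    exact hxbr_anti _ _ (by linarith)
  have hPhi_mem : ∀ x : ℝ, Phi x ∈ Set.Icc (0:ℝ) 1 := fun x => (hxbr_spec _).1
  set S : Set ℝ := {x | x ∈ Set.Icc (0:ℝ) 1 ∧ x ≤ Phi x} with hS_def
  have h0S : (0:ℝ) ∈ S := ⟨⟨le_refl 0, by norm_num⟩, (hPhi_mem 0).1⟩
  have hbdd : BddAbove S := ⟨1, fun x hx => hx.1.2⟩
  set xs : ℝ := sSup S with hxs_def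
  have hxs0 : 0 ≤ xs := le_csSup hbdd h0S
  have hxs1 : xs ≤ 1 := csSup_le ⟨0, h0S⟩ (fun x hx => hx.1.2)
  have hle : xs ≤ Phi xs :=
    csSup_le ⟨0, h0S⟩ (fun x hx => le_trans hx.2 (hPhi_mono (le_csSup hbdd hx)))
  have hfix : Phi xs = xs :=
    le_antisymm (le_csSup hbdd ⟨hPhi_mem xs, hPhi_mono hle⟩) hle
  set ys : ℝ := ybr (xs * (1 + δ)) with hys_def
  have hfix' : xbr (ys * g ys + cl) = xs := hfix
  refine ⟨xs, ys, ⟨hxs0, hxs1⟩, (hybr_spec _).1, ?_, ?_⟩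
  · intro x hx
    have h := (hxbr_spec (ys * g ys + cl)).2 x hx
    rw [hfix'] at h
    rw [Usl_eq, Usl_eq]
    exact mul_le_mul_of_nonneg_left h (by linarith)
  · intro y hy
    have h := (hybr_spec (xs * (1 + δ))).2 y hy
    rw [← hys_def] at h
    rw [Udb_eq, Udb_eq]
    linarith

/-- Theorem 2, existence part, with the boundary properties of
Proposition 3: a market share equilibrium of the revenue-sharing market share
competition game exists, and any such equilibrium satisfies x* < 1/2 and x* + y* < 1. -/
theorem stmt13
    (RL : ℝ) (f g : ℝ → ℝ)
    (hf_diff : DifferentiableOn ℝ f (Set.Icc 0 1))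
    (hf_nonneg : ∀ t ∈ Set.Icc (0:ℝ) 1, 0 ≤ f t)
    (hf_anti : AntitoneOn f (Set.Icc 0 1))
    (hf_convex : ConvexOn ℝ (Set.Icc 0 1) f)
    (hg_diff : DifferentiableOn ℝ g (Set.Icc 0 1))
    (hg_pos : ∀ t ∈ Set.Icc (0:ℝ) 1, 0 < g t)
    (hg_mono : MonotoneOn g (Set.Icc 0 1))
    (hg_concave : ConcaveOn ℝ (Set.Icc 0 1) g)
    (hRL : ∀ p ∈ Omega, f (1 - p.1) + g p.2 < RL)
    (cl ca δ : ℝ) (hcl : 0 < cl) (hca : 0 < ca) (hδ : 0 ≤ δ) (hδ1 : δ < 1) :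
    (∃ xs ys : ℝ, xs ∈ Set.Icc (0:ℝ) 1 ∧ ys ∈ Set.Icc (0:ℝ) 1 ∧
      (∀ x ∈ Set.Icc (0:ℝ) 1, Usl RL f g cl δ x ys ≤ Usl RL f g cl δ xs ys) ∧
      (∀ y ∈ Set.Icc (0:ℝ) 1, Udb RL f g ca cl δ xs y ≤ Udb RL f g ca cl δ xs ys)) ∧
    (∀ xs ys : ℝ, xs ∈ Set.Icc (0:ℝ) 1 → ys ∈ Set.Icc (0:ℝ) 1 →
      (∀ x ∈ Set.Icc (0:ℝ) 1, Usl RL f g cl δ x ys ≤ Usl RL f g cl δ xs ys) →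
      (∀ y ∈ Set.Icc (0:ℝ) 1, Udb RL f g ca cl δ xs y ≤ Udb RL f g ca cl δ xs ys) →
      xs < 1 / 2 ∧ xs + ys < 1) := by
  exact ⟨exists_eq_stmt13 RL f g hf_diff hg_diff hg_pos hg_mono cl ca δ hδ hδ1,
    fun xs ys hxs hys hx hy =>
      bdry RL f g hf_anti hg_pos hRL cl ca δ hcl hca hδ hδ1 xs ys hxs hys hx hy⟩
end

section
/- (Theorem 2, uniqueness part: dominant diagonal condition.) Assume f and g are twice continuously differentiable on [0,1], g strictly positive and nondecreasing on [0,1], δ ∈ [0,1], and suppose the dominant-diagonal condition holds on Ω: for every (x,y) ∈ Ω, −∂²U_sl/∂x²(x,y) > (1−δ)·(g(y) + y·g'(y)) and −∂²U_db/∂y²(x,y) > (1+δ)·(g(y) + y·g'(y)) (the right-hand sides being the respective cross partial derivatives ∂²U_sl/∂(−x)∂y and ∂²U_db/∂(−x)∂y). Then the market share equilibrium is unique: there is at most one pair (x*, y*) ∈ Ω such that x* maximizes U_sl(·, y*) over [0,1] and y* maximizes U_db(x*, ·) over [0,1]. -/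
open Set

/-!
If `p ≠ q` were two equilibria, write `a = q.1 - p.1`, `b = q.2 - p.2`. The first-order
conditions at both points give `(Uslx q - Uslx p) * a ≥ 0` and `(Udby q - Udby p) * b ≥ 0`.
The players interact only through `y * g y`: `Uslx x y + (1 - δ) * y * g y` is independent of `y`
and `Udby x y + (1 + δ) * x * (g y + y * g' y)` is independent of `x`. So along the segment from
`p` to `q` the marginal payoffs have explicit derivatives, and the dominant-diagonal condition
makes `t ↦ Uslx * a` strictly decreasing when `|b| ≤ |a|`, and `t ↦ Udby * b` strictly
decreasing when `|a| ≤ |b|`, contradicting the first-order conditions.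
-/

open AffineMap

theorem IsMaxOn.hasDerivWithinAt_mul_sub_nonpos {F : ℝ → ℝ} {s : Set ℝ} {a b d : ℝ}
    (hs : Convex ℝ s) (hmax : IsMaxOn F s a) (hF : HasDerivWithinAt F d s a) (ha : a ∈ s)
    (hb : b ∈ s) : d * (b - a) ≤ 0 := by
  simpa [mul_comm] using hmax.localize.hasFDerivWithinAt_nonpos hF.hasFDerivWithinAt
    (sub_mem_posTangentConeAt_of_segment_subset (hs.segment_subset ha hb))

theorem sub_mul_sub_nonneg_of_isMaxOn {F G : ℝ → ℝ} {s : Set ℝ} {a b d e : ℝ}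
    (hs : Convex ℝ s) (ha : a ∈ s) (hb : b ∈ s) (hFa : IsMaxOn F s a) (hGb : IsMaxOn G s b)
    (hF : HasDerivWithinAt F d s a) (hG : HasDerivWithinAt G e s b) :
    0 ≤ (e - d) * (b - a) := by
  have h₁ := hFa.hasDerivWithinAt_mul_sub_nonpos hs hF ha hb
  have h₂ := hGb.hasDerivWithinAt_mul_sub_nonpos hs hG hb ha
  nlinarith

theorem eq_zero_of_sub_mul_nonneg_of_dominant_diagonal {F A B : ℝ → ℝ} {a b : ℝ}
    (hba : |b| ≤ |a|)
    (hF : ∀ t ∈ Icc (0:ℝ) 1, HasDerivWithinAt F (A t * a + B t * b) (Icc 0 1) t)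
    (hAB : ∀ t ∈ Icc (0:ℝ) 1, |B t| < -A t) (hmono : 0 ≤ (F 1 - F 0) * a) : a = 0 := by
  by_contra ha
  obtain ⟨τ, hτ, hslope⟩ := exists_hasDerivAt_eq_slope (fun t => F t * a)
    (fun t => (A t * a + B t * b) * a) zero_lt_one
    (fun t ht => ((hF t ht).mul_const a).continuousWithinAt)
    (fun t ht => ((hF t (Ioo_subset_Icc_self ht)).mul_const a).hasDerivAt
      (Icc_mem_nhds ht.1 ht.2))
  have hcross : B τ * b * a ≤ |B τ| * a ^ 2 := by
    calc B τ * b * a ≤ |B τ * b * a| := le_abs_self _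
      _ = |B τ| * (|b| * |a|) := by rw [abs_mul, abs_mul, mul_assoc]
      _ ≤ |B τ| * (|a| * |a|) := by gcongr
      _ = |B τ| * a ^ 2 := by rw [abs_mul_abs_self, sq]
  have hneg : (A τ + |B τ|) * a ^ 2 < 0 :=
    mul_neg_of_neg_of_pos (by linarith [hAB τ (Ioo_subset_Icc_self hτ)]) (by positivity)
  simp only [sub_zero, div_one] at hslope
  linarith

theorem ContDiffOn.differentiableOn_of_hasDerivWithinAt {g g' : ℝ → ℝ} {s : Set ℝ}
    (hg : ContDiffOn ℝ 2 g s) (hs : UniqueDiffOn ℝ s)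
    (hg' : ∀ t ∈ s, HasDerivWithinAt g (g' t) s t) : DifferentiableOn ℝ g' s :=
  ((hg.derivWithin hs (by norm_num)).differentiableOn one_ne_zero).congr
    fun t ht => ((hg' t ht).derivWithin (hs t ht)).symm

theorem HasDerivWithinAt.id_mul {g : ℝ → ℝ} {s : Set ℝ} {y d : ℝ}
    (hg : HasDerivWithinAt g d s y) : HasDerivWithinAt (fun t => t * g t) (g y + y * d) s y := by
  simpa using (hasDerivWithinAt_id y s).fun_mul hg

section Payoffs

variable {RL : ℝ} {f g : ℝ → ℝ} {ca cl δ : ℝ}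

theorem Usl_eq_add_mul (x y y' : ℝ) :
    Usl RL f g cl δ x y = Usl RL f g cl δ x y' + (1 - δ) * (y' * g y' - y * g y) * x := by
  simp only [Usl, Pl]; ring

theorem Udb_eq_add (x x' y : ℝ) :
    Udb RL f g ca cl δ x y = Udb RL f g ca cl δ x' y
      + (Udb RL f g ca cl δ x 0 - Udb RL f g ca cl δ x' 0) + (1 + δ) * (x' - x) * (y * g y) := by
  simp only [Udb, Pl, Pa]; ring

theorem eq_add_of_hasDerivWithinAt_Usl {s : Set ℝ} {x y y' d d' : ℝ}
    (hs : UniqueDiffWithinAt ℝ s x)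
    (h : HasDerivWithinAt (fun t => Usl RL f g cl δ t y) d s x)
    (h' : HasDerivWithinAt (fun t => Usl RL f g cl δ t y') d' s x) :
    d = d' + (1 - δ) * (y' * g y' - y * g y) := by
  refine hs.eq_deriv _ h ?_
  convert h'.add ((hasDerivWithinAt_id x s).const_mul ((1 - δ) * (y' * g y' - y * g y))) using 1
  · exact funext fun t => Usl_eq_add_mul t y y'
  · simp

theorem eq_add_of_hasDerivWithinAt_Udb {g' : ℝ → ℝ} {s : Set ℝ} {x x' y d d' : ℝ}
    (hs : UniqueDiffWithinAt ℝ s y) (hg : HasDerivWithinAt g (g' y) s y)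
    (h : HasDerivWithinAt (fun t => Udb RL f g ca cl δ x t) d s y)
    (h' : HasDerivWithinAt (fun t => Udb RL f g ca cl δ x' t) d' s y) :
    d = d' + (1 + δ) * (x' - x) * (g y + y * g' y) := by
  refine hs.eq_deriv _ h ?_
  convert (h'.add_const (Udb RL f g ca cl δ x 0 - Udb RL f g ca cl δ x' 0)).add
    (hg.id_mul.const_mul ((1 + δ) * (x' - x))) using 1
  exact funext fun t => Udb_eq_add x x' t

theorem hasDerivWithinAt_Uslx_comp {g' : ℝ → ℝ} {Uslx Uslxx : ℝ → ℝ → ℝ}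
    (hg' : ∀ t ∈ Icc (0:ℝ) 1, HasDerivWithinAt g (g' t) (Icc 0 1) t)
    (hUslx : ∀ y ∈ Icc (0:ℝ) 1, ∀ x ∈ Icc (0:ℝ) 1,
      HasDerivWithinAt (fun t => Usl RL f g cl δ t y) (Uslx x y) (Icc 0 1) x)
    (hUslxx : ∀ y ∈ Icc (0:ℝ) 1, ∀ x ∈ Icc (0:ℝ) 1,
      HasDerivWithinAt (fun t => Uslx t y) (Uslxx x y) (Icc 0 1) x)
    {X Y : ℝ → ℝ} {u : Set ℝ} {a b t : ℝ} (hX : MapsTo X u (Icc 0 1))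
    (hY : MapsTo Y u (Icc 0 1)) (hXt : HasDerivWithinAt X a u t)
    (hYt : HasDerivWithinAt Y b u t) (ht : t ∈ u) :
    HasDerivWithinAt (fun s => Uslx (X s) (Y s))
      (Uslxx (X t) (Y t) * a + -((1 - δ) * (g (Y t) + Y t * g' (Y t))) * b) u t := by
  -- `Uslx` is only known to be differentiable in each variable separately: freeze `y` at `Y t`
  -- and carry the `y`-dependence by the explicit term `y * g y`.
  have hsplit : ∀ s ∈ u,
      Uslx (X s) (Y s) = Uslx (X s) (Y t) + (1 - δ) * (Y t * g (Y t) - Y s * g (Y s)) :=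
    fun s hs => eq_add_of_hasDerivWithinAt_Usl (uniqueDiffOn_Icc one_pos _ (hX hs))
      (hUslx _ (hY hs) _ (hX hs)) (hUslx _ (hY ht) _ (hX hs))
  have hown : HasDerivWithinAt (fun s => Uslx (X s) (Y t)) (Uslxx (X t) (Y t) * a) u t :=
    (hUslxx _ (hY ht) _ (hX ht)).comp t hXt hX
  have hcross : HasDerivWithinAt (fun s => Y s * g (Y s)) ((g (Y t) + Y t * g' (Y t)) * b) u t :=
    (hg' _ (hY ht)).id_mul.comp t hYt hY
  have h := (hown.add ((hcross.const_sub _).const_mul (1 - δ))).congr_of_mem hsplit ht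
  exact h.congr_deriv (by ring)

theorem hasDerivWithinAt_Udby_comp {g' : ℝ → ℝ} {Udby Udbyy : ℝ → ℝ → ℝ}
    (hg' : ∀ t ∈ Icc (0:ℝ) 1, HasDerivWithinAt g (g' t) (Icc 0 1) t)
    (hg'' : DifferentiableOn ℝ g' (Icc 0 1))
    (hUdby : ∀ x ∈ Icc (0:ℝ) 1, ∀ y ∈ Icc (0:ℝ) 1,
      HasDerivWithinAt (fun t => Udb RL f g ca cl δ x t) (Udby x y) (Icc 0 1) y)
    (hUdbyy : ∀ x ∈ Icc (0:ℝ) 1, ∀ y ∈ Icc (0:ℝ) 1,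
      HasDerivWithinAt (fun t => Udby x t) (Udbyy x y) (Icc 0 1) y)
    {X Y : ℝ → ℝ} {u : Set ℝ} {a b t : ℝ} (hX : MapsTo X u (Icc 0 1))
    (hY : MapsTo Y u (Icc 0 1)) (hXt : HasDerivWithinAt X a u t)
    (hYt : HasDerivWithinAt Y b u t) (ht : t ∈ u) :
    HasDerivWithinAt (fun s => Udby (X s) (Y s))
      (Udbyy (X t) (Y t) * b + -((1 + δ) * (g (Y t) + Y t * g' (Y t))) * a) u t := by
  have hsplit : ∀ s ∈ u, Udby (X s) (Y s)
      = Udby (X t) (Y s) + (1 + δ) * (X t - X s) * (g (Y s) + Y s * g' (Y s)) :=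
    fun s hs => eq_add_of_hasDerivWithinAt_Udb (uniqueDiffOn_Icc one_pos _ (hY hs))
      (hg' _ (hY hs)) (hUdby _ (hX hs) _ (hY hs)) (hUdby _ (hX ht) _ (hY hs))
  have hown : HasDerivWithinAt (fun s => Udby (X t) (Y s)) (Udbyy (X t) (Y t) * b) u t :=
    (hUdbyy _ (hX ht) _ (hY ht)).comp t hYt hY
  have hcross : HasDerivWithinAt (fun s => g (Y s) + Y s * g' (Y s))
      ((g' (Y t) + (g' (Y t) + Y t * derivWithin g' (Icc 0 1) (Y t))) * b) u t :=
    ((hg' _ (hY ht)).add (hg'' _ (hY ht)).hasDerivWithinAt.id_mul).comp t hYt hY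
  have h := (hown.add (((hXt.const_sub (X t)).const_mul (1 + δ)).fun_mul hcross)).congr_of_mem
    hsplit ht
  exact h.congr_deriv (by rw [sub_self]; ring)

end Payoffs

theorem convex_Omega : Convex ℝ Omega := by
  rintro p ⟨hp₁, hp₂, hp⟩ q ⟨hq₁, hq₂, hq⟩ a b ha hb hab
  refine ⟨?_, ?_, ?_⟩ <;> simp only [Prod.fst_add, Prod.snd_add, Prod.smul_fst, Prod.smul_snd,
    smul_eq_mul]
  · positivity
  · positivity
  · nlinarith

theorem mem_Icc_of_mem_Omega {p : ℝ × ℝ} (hp : p ∈ Omega) :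
    p.1 ∈ Icc (0:ℝ) 1 ∧ p.2 ∈ Icc (0:ℝ) 1 := by
  obtain ⟨h₁, h₂, h⟩ := hp
  exact ⟨⟨h₁, by linarith⟩, ⟨h₂, by linarith⟩⟩

theorem stmt14_general
    (RL : ℝ) (f g g' : ℝ → ℝ)
    (hg_C2 : ContDiffOn ℝ 2 g (Set.Icc 0 1))
    (hg_pos : ∀ t ∈ Set.Icc (0:ℝ) 1, 0 < g t)
    (hg_mono : MonotoneOn g (Set.Icc 0 1))
    (cl ca δ : ℝ) (hδ : 0 ≤ δ) (hδ1 : δ ≤ 1)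
    (hg' : ∀ t ∈ Set.Icc (0:ℝ) 1, HasDerivWithinAt g (g' t) (Set.Icc 0 1) t)
    -- first and second partial derivatives of the payoffs in own strategies
    (Uslx Uslxx Udby Udbyy : ℝ → ℝ → ℝ)
    (hUslx : ∀ y ∈ Set.Icc (0:ℝ) 1, ∀ x ∈ Set.Icc (0:ℝ) 1,
      HasDerivWithinAt (fun t => Usl RL f g cl δ t y) (Uslx x y) (Set.Icc 0 1) x)
    (hUslxx : ∀ y ∈ Set.Icc (0:ℝ) 1, ∀ x ∈ Set.Icc (0:ℝ) 1,
      HasDerivWithinAt (fun t => Uslx t y) (Uslxx x y) (Set.Icc 0 1) x)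
    (hUdby : ∀ x ∈ Set.Icc (0:ℝ) 1, ∀ y ∈ Set.Icc (0:ℝ) 1,
      HasDerivWithinAt (fun t => Udb RL f g ca cl δ x t) (Udby x y) (Set.Icc 0 1) y)
    (hUdbyy : ∀ x ∈ Set.Icc (0:ℝ) 1, ∀ y ∈ Set.Icc (0:ℝ) 1,
      HasDerivWithinAt (fun t => Udby x t) (Udbyy x y) (Set.Icc 0 1) y)
    -- the dominant-diagonal condition on Ω
    (hdom : ∀ p ∈ Omega,
      -Uslxx p.1 p.2 > (1 - δ) * (g p.2 + p.2 * g' p.2) ∧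
      -Udbyy p.1 p.2 > (1 + δ) * (g p.2 + p.2 * g' p.2)) :
    ∀ p q : ℝ × ℝ, p ∈ Omega → q ∈ Omega →
      (∀ x ∈ Set.Icc (0:ℝ) 1, Usl RL f g cl δ x p.2 ≤ Usl RL f g cl δ p.1 p.2) →
      (∀ y ∈ Set.Icc (0:ℝ) 1, Udb RL f g ca cl δ p.1 y ≤ Udb RL f g ca cl δ p.1 p.2) →
      (∀ x ∈ Set.Icc (0:ℝ) 1, Usl RL f g cl δ x q.2 ≤ Usl RL f g cl δ q.1 q.2) →
      (∀ y ∈ Set.Icc (0:ℝ) 1, Udb RL f g ca cl δ q.1 y ≤ Udb RL f g ca cl δ q.1 q.2) →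
      p = q := by
  intro p q hp hq hpx hpy hqx hqy
  obtain ⟨hp₁, hp₂⟩ := mem_Icc_of_mem_Omega hp
  obtain ⟨hq₁, hq₂⟩ := mem_Icc_of_mem_Omega hq
  have hUsl_mono : 0 ≤ (Uslx q.1 q.2 - Uslx p.1 p.2) * (q.1 - p.1) :=
    sub_mul_sub_nonneg_of_isMaxOn (convex_Icc 0 1) hp₁ hq₁ (isMaxOn_iff.2 hpx)
      (isMaxOn_iff.2 hqx) (hUslx _ hp₂ _ hp₁) (hUslx _ hq₂ _ hq₁)
  have hUdb_mono : 0 ≤ (Udby q.1 q.2 - Udby p.1 p.2) * (q.2 - p.2) :=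
    sub_mul_sub_nonneg_of_isMaxOn (convex_Icc 0 1) hp₂ hq₂ (isMaxOn_iff.2 hpy)
      (isMaxOn_iff.2 hqy) (hUdby _ hp₁ _ hp₂) (hUdby _ hq₁ _ hq₂)
  have hcross : ∀ y ∈ Icc (0:ℝ) 1, 0 ≤ g y + y * g' y := fun y hy =>
    add_nonneg (hg_pos y hy).le <| mul_nonneg hy.1 <|
      (hg' y hy).derivWithin (uniqueDiffOn_Icc one_pos y hy) ▸ hg_mono.derivWithin_nonneg
  have hseg : ∀ t ∈ Icc (0:ℝ) 1, (lineMap p.1 q.1 t, lineMap p.2 q.2 t) ∈ Omega :=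
    fun t ht => by
      rw [← fst_lineMap, ← snd_lineMap]
      exact convex_Omega.lineMap_mem hp hq ht
  have hX := (convex_Icc (0:ℝ) 1).mapsTo_lineMap (𝕜 := ℝ) hp₁ hq₁
  have hY := (convex_Icc (0:ℝ) 1).mapsTo_lineMap (𝕜 := ℝ) hp₂ hq₂
  rcases le_total |q.2 - p.2| |q.1 - p.1| with h | h
  · have hx : q.1 - p.1 = 0 := eq_zero_of_sub_mul_nonneg_of_dominant_diagonal h
      (fun t ht => hasDerivWithinAt_Uslx_comp hg' hUslx hUslxx hX hY hasDerivWithinAt_lineMap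
        hasDerivWithinAt_lineMap ht)
      (fun t ht => by
        rw [abs_neg, abs_of_nonneg (mul_nonneg (by linarith) (hcross _ (hY ht)))]
        exact (hdom _ (hseg t ht)).1)
      (by simpa only [lineMap_apply_zero, lineMap_apply_one] using hUsl_mono)
    have hy : q.2 - p.2 = 0 := abs_nonpos_iff.1 (by simpa [hx] using h)
    exact Prod.ext (by linarith) (by linarith)
  · have hy : q.2 - p.2 = 0 := eq_zero_of_sub_mul_nonneg_of_dominant_diagonal h
      (fun t ht => hasDerivWithinAt_Udby_comp hg' (hg_C2.differentiableOn_of_hasDerivWithinAt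
        (uniqueDiffOn_Icc one_pos) hg') hUdby hUdbyy hX hY hasDerivWithinAt_lineMap
        hasDerivWithinAt_lineMap ht)
      (fun t ht => by
        rw [abs_neg, abs_of_nonneg (mul_nonneg (by linarith) (hcross _ (hY ht)))]
        exact (hdom _ (hseg t ht)).2)
      (by simpa only [lineMap_apply_zero, lineMap_apply_one] using hUdb_mono)
    have hx : q.1 - p.1 = 0 := abs_nonpos_iff.1 (by simpa [hy] using h)
    exact Prod.ext (by linarith) (by linarith)

/-- Theorem 2, uniqueness part: dominant diagonal condition: under the
dominant-diagonal condition on Ω there is at most one market share equilibrium of the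
revenue-sharing market share competition game. -/
theorem stmt14
    (RL : ℝ) (f g g' : ℝ → ℝ)
    (hf_C2 : ContDiffOn ℝ 2 f (Set.Icc 0 1))
    (hg_C2 : ContDiffOn ℝ 2 g (Set.Icc 0 1))
    (hg_pos : ∀ t ∈ Set.Icc (0:ℝ) 1, 0 < g t)
    (hg_mono : MonotoneOn g (Set.Icc 0 1))
    (hRL : ∀ p ∈ Omega, f (1 - p.1) + g p.2 < RL)
    (cl ca δ : ℝ) (hδ : 0 ≤ δ) (hδ1 : δ ≤ 1)
    (hg' : ∀ t ∈ Set.Icc (0:ℝ) 1, HasDerivWithinAt g (g' t) (Set.Icc 0 1) t)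
    -- first and second partial derivatives of the payoffs in own strategies
    (Uslx Uslxx Udby Udbyy : ℝ → ℝ → ℝ)
    (hUslx : ∀ y ∈ Set.Icc (0:ℝ) 1, ∀ x ∈ Set.Icc (0:ℝ) 1,
      HasDerivWithinAt (fun t => Usl RL f g cl δ t y) (Uslx x y) (Set.Icc 0 1) x)
    (hUslxx : ∀ y ∈ Set.Icc (0:ℝ) 1, ∀ x ∈ Set.Icc (0:ℝ) 1,
      HasDerivWithinAt (fun t => Uslx t y) (Uslxx x y) (Set.Icc 0 1) x)
    (hUdby : ∀ x ∈ Set.Icc (0:ℝ) 1, ∀ y ∈ Set.Icc (0:ℝ) 1,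
      HasDerivWithinAt (fun t => Udb RL f g ca cl δ x t) (Udby x y) (Set.Icc 0 1) y)
    (hUdbyy : ∀ x ∈ Set.Icc (0:ℝ) 1, ∀ y ∈ Set.Icc (0:ℝ) 1,
      HasDerivWithinAt (fun t => Udby x t) (Udbyy x y) (Set.Icc 0 1) y)
    -- the dominant-diagonal condition on Ω
    (hdom : ∀ p ∈ Omega,
      -Uslxx p.1 p.2 > (1 - δ) * (g p.2 + p.2 * g' p.2) ∧
      -Udbyy p.1 p.2 > (1 + δ) * (g p.2 + p.2 * g' p.2)) :
    ∀ p q : ℝ × ℝ, p ∈ Omega → q ∈ Omega →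
      (∀ x ∈ Set.Icc (0:ℝ) 1, Usl RL f g cl δ x p.2 ≤ Usl RL f g cl δ p.1 p.2) →
      (∀ y ∈ Set.Icc (0:ℝ) 1, Udb RL f g ca cl δ p.1 y ≤ Udb RL f g ca cl δ p.1 p.2) →
      (∀ x ∈ Set.Icc (0:ℝ) 1, Usl RL f g cl δ x q.2 ≤ Usl RL f g cl δ q.1 q.2) →
      (∀ y ∈ Set.Icc (0:ℝ) 1, Udb RL f g ca cl δ q.1 y ≤ Udb RL f g ca cl δ q.1 q.2) →
      p = q :=
  stmt14_general RL f g g' hg_C2 hg_pos hg_mono cl ca δ hδ hδ1 hg' Uslx Uslxx Udby Udbyy hUslx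
    hUslxx hUdby hUdbyy hdom
end

section
/- (Supermodularity step under WPS.) Assume g is nonnegative and nondecreasing on [0,1] and w ≥ 0. Then both wholesale-pricing payoffs have increasing differences in (−x, y): for all 0 ≤ x₁ ≤ x₂ ≤ 1 and 0 ≤ y₁ ≤ y₂ ≤ 1, U_sl^{II}(x₁, y₂) − U_sl^{II}(x₂, y₂) ≥ U_sl^{II}(x₁, y₁) − U_sl^{II}(x₂, y₁) and U_db^{II}(x₁, y₂) − U_db^{II}(x₂, y₂) ≥ U_db^{II}(x₁, y₁) − U_db^{II}(x₂, y₁). -/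
open Set

/-- supermodularity step under WPS: both wholesale-pricing payoffs have
increasing differences in (−x, y). -/
theorem stmt15
    (RL : ℝ) (f g : ℝ → ℝ)
    (hg_nonneg : ∀ t ∈ Set.Icc (0:ℝ) 1, 0 ≤ g t)
    (hg_mono : MonotoneOn g (Set.Icc 0 1))
    (w cl ca : ℝ) (hw : 0 ≤ w)
    (x₁ x₂ y₁ y₂ : ℝ)
    (hx₁ : 0 ≤ x₁) (hx12 : x₁ ≤ x₂) (hx₂ : x₂ ≤ 1)
    (hy₁ : 0 ≤ y₁) (hy12 : y₁ ≤ y₂) (hy₂ : y₂ ≤ 1) :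
    (UslII RL f g w cl x₁ y₂ - UslII RL f g w cl x₂ y₂ ≥
      UslII RL f g w cl x₁ y₁ - UslII RL f g w cl x₂ y₁) ∧
    (UdbII g w ca x₁ y₂ - UdbII g w ca x₂ y₂ ≥
      UdbII g w ca x₁ y₁ - UdbII g w ca x₂ y₁) := by
  have hy1m : y₁ ∈ Set.Icc (0:ℝ) 1 := ⟨hy₁, le_trans hy12 hy₂⟩
  have hy2m : y₂ ∈ Set.Icc (0:ℝ) 1 := ⟨le_trans hy₁ hy12, hy₂⟩
  have hg1 : 0 ≤ g y₁ := hg_nonneg _ hy1m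
  have hg2 : 0 ≤ g y₂ := hg_nonneg _ hy2m
  have hgm : g y₁ ≤ g y₂ := hg_mono hy1m hy2m hy12
  have key : y₁ * g y₁ ≤ y₂ * g y₂ :=
    mul_le_mul hy12 hgm hg1 (le_trans hy₁ hy12)
  constructor <;>
  · simp only [UslII, UdbII, Pl, Pa]
    nlinarith [mul_le_mul_of_nonneg_left key (sub_nonneg.2 hx12)]
end

section
/- (Unique leasing-only equilibrium equation, used in Proposition 1 case θ_lb ≤ θ_ab.) Let f : ℝ → ℝ be continuous and nonincreasing on [0,1], let R_L ∈ ℝ satisfy R_L > f(t) for all t ∈ [0,1], and let 0 < p_l < R_L − f(1). Then there exists exactly one x† ∈ (0,1) such that x† = 1 − p_l/(R_L − f(1−x†)). -/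
/-- unique leasing-only equilibrium equation: there is exactly one
x† ∈ (0,1) with x† = 1 − p_l/(R_L − f(1−x†)). -/
theorem stmt18
    (RL : ℝ) (f : ℝ → ℝ)
    (hf_cont : ContinuousOn f (Set.Icc 0 1))
    (hf_anti : AntitoneOn f (Set.Icc 0 1))
    (hRL : ∀ t ∈ Set.Icc (0:ℝ) 1, f t < RL)
    (pl : ℝ) (hpl_pos : 0 < pl) (hpl_lt : pl < RL - f 1) :
    ∃! x : ℝ, x ∈ Set.Ioo (0:ℝ) 1 ∧ x = 1 - pl / (RL - f (1 - x)) := by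
  set g : ℝ → ℝ := fun x => x - 1 + pl / (RL - f (1 - x)) with hg
  have hmem : ∀ x ∈ Set.Icc (0:ℝ) 1, (1 - x) ∈ Set.Icc (0:ℝ) 1 := by
    intro x hx
    constructor <;> [linarith [hx.2]; linarith [hx.1]]
  have hpos : ∀ x ∈ Set.Icc (0:ℝ) 1, 0 < RL - f (1 - x) := by
    intro x hx
    have := hRL (1 - x) (hmem x hx)
    linarith
  -- g continuous on [0,1]
  have hgc : ContinuousOn g (Set.Icc 0 1) := by
    apply ContinuousOn.add
    · exact (continuousOn_id.sub continuousOn_const)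
    · apply ContinuousOn.div continuousOn_const
      · apply ContinuousOn.sub continuousOn_const
        exact hf_cont.comp (continuousOn_const.sub continuousOn_id) hmem
      · intro x hx
        exact ne_of_gt (hpos x hx)
  -- g strictly increasing on [0,1]
  have hmono : StrictMonoOn g (Set.Icc 0 1) := by
    intro x hx y hy hxy
    have h1 : f (1 - x) ≤ f (1 - y) := hf_anti (hmem y hy) (hmem x hx) (by linarith)
    have h2 : pl / (RL - f (1 - x)) ≤ pl / (RL - f (1 - y)) := by
      apply div_le_div_of_nonneg_left hpl_pos.le (hpos y hy)
      linarith
    simp only [hg]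
    linarith
  have h0 : (0:ℝ) ∈ Set.Icc (0:ℝ) 1 := by norm_num
  have h1 : (1:ℝ) ∈ Set.Icc (0:ℝ) 1 := by norm_num
  have hg0 : g 0 < 0 := by
    have hp : 0 < RL - f (1 - 0) := hpos 0 h0
    have : pl / (RL - f (1 - 0)) < 1 := by
      rw [div_lt_one hp]
      simp only [sub_zero] at *
      linarith
    simp only [hg]
    linarith
  have hg1 : 0 < g 1 := by
    have hp : 0 < RL - f (1 - 1) := hpos 1 h1
    have : 0 < pl / (RL - f (1 - 1)) := div_pos hpl_pos hp
    simp only [hg]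
    linarith
  -- existence via IVT
  have hsub : Set.Ioo (g 0) (g 1) ⊆ g '' Set.Ioo 0 1 := by
    have := intermediate_value_Ioo (by norm_num : (0:ℝ) ≤ 1) hgc
    simpa using this
  obtain ⟨x, hx, hgx⟩ := hsub ⟨hg0, hg1⟩
  refine ⟨x, ⟨hx, ?_⟩, ?_⟩
  · have : x - 1 + pl / (RL - f (1 - x)) = 0 := hgx
    linarith
  · rintro y ⟨hy, hyeq⟩
    have hgy : g y = 0 := by simp only [hg]; linarith
    have hxI : x ∈ Set.Icc (0:ℝ) 1 := Set.mem_Icc_of_Ioo hx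
    have hyI : y ∈ Set.Icc (0:ℝ) 1 := Set.mem_Icc_of_Ioo hy
    rcases lt_trichotomy y x with h | h | h
    · have := hmono hyI hxI h
      rw [hgy, hgx] at this; linarith
    · exact h
    · have := hmono hxI hyI h
      rw [hgy, hgx] at this; linarith
end
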